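/- arXiv:0903.0070 — 4 statements merged into one kernel-verified Lean document; each statement's English description precedes it below -/
import Mathlib

section
/- Under hypotheses (H1) and (H3), every point a ∈ Γ₊ with a ∉ {a(1,0), a(0,1)} has an open neighborhood U ⊂ ℝ² such that for every a' ∈ U and every z ∈ ℕ*×ℕ*, the quantity E_z(exp(a'·S(τ)); τ < ∞) is finite. -/
open scoped ENNReal Classical
open Filter

namespace KRWQ

/-- `n`-step transition probabilities of the homogeneous random walk with step
distribution `μ` on an abelian group `G`: `nstep μ n z z' = P_z(S(n) = z')`. -/
noncomputable def nstep {G : Type*} [AddCommGroup G] (μ : G → ℝ≥0∞) : ℕ → G → G → ℝ≥0∞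
  | 0, z, z' => if z' = z then 1 else 0
  | n + 1, z, z' => ∑' w : G, nstep μ n z w * μ (z' - w)

/-- `n`-step transition probabilities of the random walk killed outside the set `A`:
for `z ∈ A`, `nstepK μ A n z z' = P_z(S(n) = z', S(k) ∈ A for all k ≤ n)`. -/
noncomputable def nstepK {G : Type*} [AddCommGroup G] (μ : G → ℝ≥0∞) (A : Set G) :
    ℕ → G → G → ℝ≥0∞
  | 0, z, z' => if z' = z then 1 else 0
  | n + 1, z, z' => A.indicator (fun u => ∑' w : G, nstepK μ A n z w * μ (u - w)) z'

/-- Green function of the homogeneous random walk. -/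
noncomputable def green {G : Type*} [AddCommGroup G] (μ : G → ℝ≥0∞) (z z' : G) : ℝ≥0∞ :=
  ∑' n : ℕ, nstep μ n z z'

/-- Green function of the random walk killed outside `A`. -/
noncomputable def greenK {G : Type*} [AddCommGroup G] (μ : G → ℝ≥0∞) (A : Set G)
    (z z' : G) : ℝ≥0∞ :=
  ∑' n : ℕ, nstepK μ A n z z'

/-- Distribution of the exit position: for `z ∈ A`, `exitK μ A z w` is the probability
that the walk started at `z` first exits `A` (in finite time) at the point `w`,
i.e. `P_z(τ < ∞, S(τ) = w)` where `τ = inf{n ≥ 0 : S(n) ∉ A}`. -/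
noncomputable def exitK {G : Type*} [AddCommGroup G] (μ : G → ℝ≥0∞) (A : Set G)
    (z w : G) : ℝ≥0∞ :=
  Aᶜ.indicator (fun u => ∑' n : ℕ, ∑' v : G, nstepK μ A n z v * μ (u - v)) w

/-- `Eexit μ A z f = E_z(f(S(τ)); τ < ∞)` for a nonnegative `f`,
where `τ` is the first exit time from `A` and `z ∈ A`. -/
noncomputable def Eexit {G : Type*} [AddCommGroup G] (μ : G → ℝ≥0∞) (A : Set G) (z : G)
    (f : G → ℝ≥0∞) : ℝ≥0∞ :=
  ∑' w : G, exitK μ A z w * f w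

/-- `EexitR μ A z f = E_z(f(S(τ)); τ < ∞)` for a signed `f` (real-valued version). -/
noncomputable def EexitR {G : Type*} [AddCommGroup G] (μ : G → ℝ≥0∞) (A : Set G) (z : G)
    (f : G → ℝ) : ℝ :=
  ∑' w : G, (exitK μ A z w).toReal * f w

/-- Euclidean scalar product on `ℝ²`. -/
def dot (a b : ℝ × ℝ) : ℝ := a.1 * b.1 + a.2 * b.2

/-- Embedding of the lattice `ℤ²` into `ℝ²`. -/
def toR (z : ℤ × ℤ) : ℝ × ℝ := ((z.1 : ℝ), (z.2 : ℝ))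

/-- Euclidean norm on `ℝ²`. -/
noncomputable def norE (p : ℝ × ℝ) : ℝ := Real.sqrt (p.1 ^ 2 + p.2 ^ 2)

/-- Euclidean norm of a lattice point. -/
noncomputable def normZ (z : ℤ × ℤ) : ℝ := norE (toR z)

/-- The open quadrant `ℕ* × ℕ*`. -/
def quadrant : Set (ℤ × ℤ) := {z | 0 < z.1 ∧ 0 < z.2}

/-- The half plane `ℤ × ℕ*` (state space of the local process `Z¹₊`). -/
def upperHalf : Set (ℤ × ℤ) := {z | 0 < z.2}

/-- The half plane `ℕ* × ℤ` (state space of the local process `Z²₊`). -/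
def rightHalf : Set (ℤ × ℤ) := {z | 0 < z.1}

/-- The jump generating function `φ(a) = ∑_z μ(z) exp(a·z)`. -/
noncomputable def jumpGF (μ : ℤ × ℤ → ℝ≥0∞) (a : ℝ × ℝ) : ℝ≥0∞ :=
  ∑' z : ℤ × ℤ, μ z * ENNReal.ofReal (Real.exp (dot a (toR z)))

/-- Hypothesis (H1): the homogeneous random walk `S` with step distribution `μ`
is irreducible, and its mean `m = ∑_z z μ(z)` exists and is nonzero. -/
def H1 (μ : ℤ × ℤ → ℝ≥0∞) : Prop :=
  (∀ z z' : ℤ × ℤ, ∃ n : ℕ, 0 < nstep μ n z z') ∧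
    Summable (fun z : ℤ × ℤ => ((z.1 : ℝ)) * (μ z).toReal) ∧
    Summable (fun z : ℤ × ℤ => ((z.2 : ℝ)) * (μ z).toReal) ∧
    ((∑' z : ℤ × ℤ, ((z.1 : ℝ)) * (μ z).toReal, ∑' z : ℤ × ℤ, ((z.2 : ℝ)) * (μ z).toReal)
      ≠ ((0 : ℝ), (0 : ℝ)))

/-- Hypothesis (H2): the random walk killed outside the quadrant is irreducible
on the quadrant. -/
def H2 (μ : ℤ × ℤ → ℝ≥0∞) : Prop :=
  ∀ z ∈ quadrant, ∀ z' ∈ quadrant, ∃ n : ℕ, 0 < nstepK μ quadrant n z z'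

/-- Hypothesis (H3): the jump generating function is finite everywhere on `ℝ²`. -/
def H3 (μ : ℤ × ℤ → ℝ≥0∞) : Prop := ∀ a : ℝ × ℝ, jumpGF μ a < ⊤

/-- `d` is a greatest common divisor of the set `K` of natural numbers. -/
def IsGcdOfSet (K : Set ℕ) (d : ℕ) : Prop :=
  (∀ k ∈ K, d ∣ k) ∧ ∀ c : ℕ, (∀ k ∈ K, c ∣ k) → c ∣ d

/-- First marginal of `μ`: step distribution of the coordinate walk `S₁`. -/
noncomputable def marg1 (μ : ℤ × ℤ → ℝ≥0∞) : ℤ → ℝ≥0∞ := fun x => ∑' y : ℤ, μ (x, y)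

/-- Second marginal of `μ`: step distribution of the coordinate walk `S₂`. -/
noncomputable def marg2 (μ : ℤ × ℤ → ℝ≥0∞) : ℤ → ℝ≥0∞ := fun y => ∑' x : ℤ, μ (x, y)

/-- Hypothesis (H4): the coordinate random walks `S₁` and `S₂` are aperiodic on `ℤ`. -/
def H4 (μ : ℤ × ℤ → ℝ≥0∞) : Prop :=
  IsGcdOfSet {k : ℕ | 0 < k ∧ 0 < nstep (marg1 μ) k (0 : ℤ) 0} 1 ∧
    IsGcdOfSet {k : ℕ | 0 < k ∧ 0 < nstep (marg2 μ) k (0 : ℤ) 0} 1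

/-- The set `𝒮²₊` of unit vectors of `ℝ²` with nonnegative coordinates. -/
def Spos : Set (ℝ × ℝ) := {q | 0 ≤ q.1 ∧ 0 ≤ q.2 ∧ norE q = 1}

/-- `aOf` is the map `q ↦ a(q)`, the inverse of the homeomorphism
`a ↦ ∇φ(a)/|∇φ(a)|` from `∂D` onto the unit circle (extended to all nonzero `q` by
homogeneity).  Equivalently, `a(q)` is the unique point of `D = {a : φ(a) ≤ 1}` where
the linear functional `a ↦ a·q` attains its maximum over `D`, and it lies on `∂D`. -/
def IsDirMap (μ : ℤ × ℤ → ℝ≥0∞) (aOf : ℝ × ℝ → ℝ × ℝ) : Prop :=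
  ∀ q : ℝ × ℝ, q ≠ 0 →
    jumpGF μ (aOf q) = 1 ∧
      ∀ a : ℝ × ℝ, jumpGF μ a ≤ 1 → a ≠ aOf q → dot a q < dot (aOf q) q

/-- The arc `Γ₊ = {a ∈ ∂D : q(a) ∈ 𝒮²₊}`. -/
def GammaPlus (aOf : ℝ × ℝ → ℝ × ℝ) : Set (ℝ × ℝ) := {a | ∃ q ∈ Spos, a = aOf q}

/-- The integrand appearing in the boundary term of `h_a`. -/
noncomputable def haIntegrand (aOf : ℝ × ℝ → ℝ × ℝ) (a : ℝ × ℝ) (w : ℤ × ℤ) : ℝ :=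
  if a = aOf ((0 : ℝ), (1 : ℝ)) then (w.1 : ℝ) * Real.exp (dot a (toR w))
  else if a = aOf ((1 : ℝ), (0 : ℝ)) then (w.2 : ℝ) * Real.exp (dot a (toR w))
  else Real.exp (dot a (toR w))

/-- The leading term of `h_a`. -/
noncomputable def haLead (aOf : ℝ × ℝ → ℝ × ℝ) (a : ℝ × ℝ) (z : ℤ × ℤ) : ℝ :=
  if a = aOf ((0 : ℝ), (1 : ℝ)) then (z.1 : ℝ) * Real.exp (dot a (toR z))
  else if a = aOf ((1 : ℝ), (0 : ℝ)) then (z.2 : ℝ) * Real.exp (dot a (toR z))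
  else Real.exp (dot a (toR z))

/-- The harmonic function `h_a` of the killed random walk, defined by (1.3). -/
noncomputable def haFun (μ : ℤ × ℤ → ℝ≥0∞) (aOf : ℝ × ℝ → ℝ × ℝ) (a : ℝ × ℝ)
    (z : ℤ × ℤ) : ℝ :=
  haLead aOf a z - EexitR μ quadrant z (haIntegrand aOf a)

/-- Expectation over the event `{τ = τ₁ < τ₂}`, i.e. the walk exits the quadrant
through the boundary `{w : w₁ ≤ 0, w₂ > 0}`. -/
noncomputable def Eexit1 (μ : ℤ × ℤ → ℝ≥0∞) (z : ℤ × ℤ) (f : ℤ × ℤ → ℝ≥0∞) : ℝ≥0∞ :=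
  ∑' w : ℤ × ℤ, (if w.1 ≤ 0 ∧ 0 < w.2 then exitK μ quadrant z w * f w else 0)

/-- The support function `w ↦ a(w)·w = max_{a ∈ D} a·w`, with the convention that it
vanishes at `w = 0`. -/
noncomputable def support (aOf : ℝ × ℝ → ℝ × ℝ) (w : ℝ × ℝ) : ℝ :=
  if w = 0 then 0 else dot (aOf w) w

/-- The function `λ_ε(q,w) = a(w)·w + a(q-w)·(q-w) - ε|w|`. -/
noncomputable def lamEps (aOf : ℝ × ℝ → ℝ × ℝ) (ε : ℝ) (q w : ℝ × ℝ) : ℝ :=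
  support aOf w + support aOf (q - w) - ε * norE w

/-- The principal part `Ξ^q_δ(z,zₙ)` of the renewal equation. -/
noncomputable def XiQ (μ : ℤ × ℤ → ℝ≥0∞) (q : ℝ × ℝ) (δ : ℝ) (z zn : ℤ × ℤ) : ℝ :=
  if q = ((1 : ℝ), (0 : ℝ)) then
    (greenK μ upperHalf z zn).toReal -
      ∑' w : ℤ × ℤ, (exitK μ quadrant z w).toReal *
        (if w.1 ≤ 0 ∧ 0 < w.2 ∧ normZ w < δ * normZ zn then
          (greenK μ upperHalf w zn).toReal else 0)
  else if q = ((0 : ℝ), (1 : ℝ)) then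
    (greenK μ rightHalf z zn).toReal -
      ∑' w : ℤ × ℤ, (exitK μ quadrant z w).toReal *
        (if w.2 ≤ 0 ∧ 0 < w.1 ∧ normZ w < δ * normZ zn then
          (greenK μ rightHalf w zn).toReal else 0)
  else
    (green μ z zn).toReal -
      ∑' w : ℤ × ℤ, (exitK μ quadrant z w).toReal *
        (if normZ w < δ * normZ zn then (green μ w zn).toReal else 0)

/-!
Superharmonicity is the whole mechanism: for `b ∈ D = {φ ≤ 1}` the function `w ↦ exp(b·w)` is
superharmonic for the walk, so by optional stopping `E_z(exp(b·S(τ)); τ < ∞) ≤ exp(b·z)`.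
An exit point `w` has `w₁ ≤ 0` or `w₂ ≤ 0`; hence `exp(a'·w) ≤ exp(b·w) + exp(c·w)` as soon as
`b, c ∈ D` satisfy `b₂ = a'₂, b₁ ≤ a'₁` and `c₁ = a'₁, c₂ ≤ a'₂`. At a noncritical point `a = a(q)`
both coordinates of `q` are positive, so `a` lies strictly to the right of the chord of `∂D` joining
`a(0,-1)` to `a(0,1)` and strictly above the chord joining `a(-1,0)` to `a(1,0)`; both conditions
persist near `a`, and the chords provide `b` and `c`.
-/

open Topology

section OptionalStopping

variable {G : Type*} [AddCommGroup G] (μ : G → ℝ≥0∞) (A : Set G)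

/-- Probability of leaving `A` at time `n + 1`, at the point `u`. -/
noncomputable def exitAt (n : ℕ) (z u : G) : ℝ≥0∞ :=
  Aᶜ.indicator (fun u => ∑' v : G, nstepK μ A n z v * μ (u - v)) u

lemma nstepK_succ_add_exitAt (n : ℕ) (z u : G) :
    nstepK μ A (n + 1) z u + exitAt μ A n z u = ∑' v : G, nstepK μ A n z v * μ (u - v) :=
  Set.indicator_self_add_compl_apply A _ u

lemma exitK_eq_tsum_exitAt (z w : G) : exitK μ A z w = ∑' n : ℕ, exitAt μ A n z w := by
  by_cases hw : w ∈ A <;> simp [exitK, exitAt, hw]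

lemma exitK_eq_zero_of_mem {z w : G} (hw : w ∈ A) : exitK μ A z w = 0 :=
  Set.indicator_of_notMem (Set.notMem_compl_iff.2 hw) _

variable {μ} {f : G → ℝ≥0∞}

/-- One step of the supermartingale `f(S(n ∧ τ))`. -/
lemma tsum_nstepK_succ_add_exitAt_le (hf : ∀ v, ∑' u : G, μ (u - v) * f u ≤ f v)
    (n : ℕ) (z : G) :
    ∑' w : G, nstepK μ A (n + 1) z w * f w + ∑' u : G, exitAt μ A n z u * f u
      ≤ ∑' w : G, nstepK μ A n z w * f w := by
  calc ∑' w : G, nstepK μ A (n + 1) z w * f w + ∑' u : G, exitAt μ A n z u * f u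
      = ∑' u : G, ∑' v : G, nstepK μ A n z v * (μ (u - v) * f u) := by
        rw [← ENNReal.tsum_add]
        refine tsum_congr fun u => ?_
        rw [← add_mul, nstepK_succ_add_exitAt, ← ENNReal.tsum_mul_right]
        simp only [mul_assoc]
    _ = ∑' v : G, nstepK μ A n z v * ∑' u : G, μ (u - v) * f u := by
        rw [ENNReal.tsum_comm]
        simp only [ENNReal.tsum_mul_left]
    _ ≤ ∑' w : G, nstepK μ A n z w * f w :=
        ENNReal.tsum_le_tsum fun v => mul_le_mul_right (hf v) _

lemma Eexit_le_of_superharmonic (hf : ∀ v, ∑' u : G, μ (u - v) * f u ≤ f v) (z : G) :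
    Eexit μ A z f ≤ f z := by
  have htelescope : ∀ n, ∑' w : G, nstepK μ A n z w * f w
      + ∑ k ∈ Finset.range n, ∑' u : G, exitAt μ A k z u * f u ≤ f z := by
    intro n
    induction n with
    | zero =>
      rw [Finset.sum_range_zero, add_zero, tsum_eq_single z fun w hw => by simp [nstepK, hw]]
      simp [nstepK]
    | succ n ih =>
      rw [Finset.sum_range_succ, add_comm (∑ k ∈ _, _), ← add_assoc]
      exact (add_le_add_left (tsum_nstepK_succ_add_exitAt_le A hf n z) _).trans ih
  calc Eexit μ A z f = ∑' n : ℕ, ∑' u : G, exitAt μ A n z u * f u := by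
        simp only [Eexit, exitK_eq_tsum_exitAt, ← ENNReal.tsum_mul_right]
        exact ENNReal.tsum_comm
    _ ≤ f z := ENNReal.tsum_le_of_sum_range_le fun n => le_add_self.trans (htelescope n)

lemma Eexit_le_add {z : G} {g h : G → ℝ≥0∞} (hfgh : ∀ w ∉ A, f w ≤ g w + h w) :
    Eexit μ A z f ≤ Eexit μ A z g + Eexit μ A z h := by
  rw [Eexit, Eexit, Eexit, ← ENNReal.tsum_add]
  refine ENNReal.tsum_le_tsum fun w => ?_
  by_cases hw : w ∈ A
  · simp [exitK_eq_zero_of_mem μ A hw]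
  · rw [← mul_add]
    exact mul_le_mul_right (hfgh w hw) _

end OptionalStopping

lemma dot_smul_add_smul (s t : ℝ) (x y w : ℝ × ℝ) :
    dot (s • x + t • y) w = s * dot x w + t * dot y w := by
  simp only [dot, Prod.fst_add, Prod.snd_add, Prod.smul_fst, Prod.smul_snd, smul_eq_mul]
  ring

lemma dot_swap (x y : ℝ × ℝ) : dot x.swap y.swap = dot x y := add_comm _ _

lemma dot_toR_add_sub (b : ℝ × ℝ) (u v : ℤ × ℤ) :
    dot b (toR u) = dot b (toR v) + dot b (toR (u - v)) := by
  simp only [dot, toR, Prod.fst_sub, Prod.snd_sub, Int.cast_sub]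
  ring

noncomputable def expDot (b : ℝ × ℝ) (w : ℤ × ℤ) : ℝ≥0∞ :=
  ENNReal.ofReal (Real.exp (dot b (toR w)))

lemma expDot_le_expDot {b c : ℝ × ℝ} {w : ℤ × ℤ} (h : dot b (toR w) ≤ dot c (toR w)) :
    expDot b w ≤ expDot c w :=
  ENNReal.ofReal_le_ofReal (Real.exp_le_exp.2 h)

lemma tsum_mul_expDot_le {μ : ℤ × ℤ → ℝ≥0∞} {b : ℝ × ℝ} (hb : jumpGF μ b ≤ 1) (v : ℤ × ℤ) :
    ∑' u : ℤ × ℤ, μ (u - v) * expDot b u ≤ expDot b v := by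
  calc ∑' u : ℤ × ℤ, μ (u - v) * expDot b u
      = expDot b v * ∑' u : ℤ × ℤ, μ (u - v) * expDot b (u - v) := by
        rw [← ENNReal.tsum_mul_left]
        refine tsum_congr fun u => ?_
        rw [expDot, expDot, expDot, dot_toR_add_sub b u v, Real.exp_add,
          ENNReal.ofReal_mul (Real.exp_nonneg _)]
        ring
    _ = expDot b v * jumpGF μ b := by
        congr 1
        exact (Equiv.subRight v).tsum_eq fun w => μ w * expDot b w
    _ ≤ expDot b v := mul_le_of_le_one_right' hb

lemma convex_jumpGF_le_one (μ : ℤ × ℤ → ℝ≥0∞) : Convex ℝ {a | jumpGF μ a ≤ 1} := by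
  intro x hx y hy s t hs ht hst
  have hterm : ∀ z : ℤ × ℤ, μ z * expDot (s • x + t • y) z
      ≤ ENNReal.ofReal s * (μ z * expDot x z) + ENNReal.ofReal t * (μ z * expDot y z) := by
    intro z
    have hexp := convexOn_exp.2 (Set.mem_univ (dot x (toR z))) (Set.mem_univ (dot y (toR z)))
      hs ht hst
    simp only [smul_eq_mul] at hexp
    calc μ z * expDot (s • x + t • y) z
        ≤ μ z * ENNReal.ofReal (s * Real.exp (dot x (toR z)) + t * Real.exp (dot y (toR z))) := by
          rw [expDot, dot_smul_add_smul]
          gcongr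
      _ = _ := by
          rw [ENNReal.ofReal_add (by positivity) (by positivity), ENNReal.ofReal_mul hs,
            ENNReal.ofReal_mul ht, expDot, expDot]
          ring
  calc jumpGF μ (s • x + t • y)
      ≤ ∑' z : ℤ × ℤ, (ENNReal.ofReal s * (μ z * expDot x z)
          + ENNReal.ofReal t * (μ z * expDot y z)) := ENNReal.tsum_le_tsum hterm
    _ = ENNReal.ofReal s * jumpGF μ x + ENNReal.ofReal t * jumpGF μ y := by
        rw [ENNReal.tsum_add, ENNReal.tsum_mul_left, ENNReal.tsum_mul_left]
        rfl
    _ ≤ ENNReal.ofReal s + ENNReal.ofReal t := by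
        gcongr <;> exact mul_le_of_le_one_right' ‹_›
    _ = 1 := by rw [← ENNReal.ofReal_add hs ht, hst, ENNReal.ofReal_one]

lemma expDot_le_add_of_notMem_quadrant {p b c : ℝ × ℝ} (hb₂ : b.2 = p.2) (hb₁ : b.1 ≤ p.1)
    (hc₁ : c.1 = p.1) (hc₂ : c.2 ≤ p.2) {w : ℤ × ℤ} (hw : w ∉ quadrant) :
    expDot p w ≤ expDot b w + expDot c w := by
  simp only [quadrant, Set.mem_ofPred_eq, not_and_or, not_lt] at hw
  rcases hw with hw | hw
  · refine (expDot_le_expDot ?_).trans le_self_add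
    have : (w.1 : ℝ) ≤ 0 := by exact_mod_cast hw
    simp only [dot, toR, hb₂]
    nlinarith
  · refine (expDot_le_expDot ?_).trans le_add_self
    have : (w.2 : ℝ) ≤ 0 := by exact_mod_cast hw
    simp only [dot, toR, hc₁]
    nlinarith

lemma Eexit_quadrant_expDot_lt_top {μ : ℤ × ℤ → ℝ≥0∞} {p b c : ℝ × ℝ}
    (hb : jumpGF μ b ≤ 1) (hb₂ : b.2 = p.2) (hb₁ : b.1 ≤ p.1)
    (hc : jumpGF μ c ≤ 1) (hc₁ : c.1 = p.1) (hc₂ : c.2 ≤ p.2) (z : ℤ × ℤ) :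
    Eexit μ quadrant z (expDot p) < ⊤ :=
  calc Eexit μ quadrant z (expDot p)
      ≤ Eexit μ quadrant z (expDot b) + Eexit μ quadrant z (expDot c) :=
        Eexit_le_add quadrant fun _ => expDot_le_add_of_notMem_quadrant hb₂ hb₁ hc₁ hc₂
    _ ≤ expDot b z + expDot c z :=
        add_le_add (Eexit_le_of_superharmonic quadrant (tsum_mul_expDot_le hb) z)
          (Eexit_le_of_superharmonic quadrant (tsum_mul_expDot_le hc) z)
    _ < ⊤ := ENNReal.add_lt_top.2 ⟨ENNReal.ofReal_lt_top, ENNReal.ofReal_lt_top⟩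

def IsSupportPoint (D : Set (ℝ × ℝ)) (q a : ℝ × ℝ) : Prop :=
  a ∈ D ∧ ∀ b ∈ D, b ≠ a → dot b q < dot a q

lemma IsDirMap.isSupportPoint {μ : ℤ × ℤ → ℝ≥0∞} {aOf : ℝ × ℝ → ℝ × ℝ} (h : IsDirMap μ aOf)
    {q : ℝ × ℝ} (hq : q ≠ 0) : IsSupportPoint {b | jumpGF μ b ≤ 1} q (aOf q) :=
  ⟨(h q hq).1.le, (h q hq).2⟩

section SupportPoints

variable {D : Set (ℝ × ℝ)} {q a T B R L : ℝ × ℝ}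

lemma IsSupportPoint.swap (h : IsSupportPoint D q a) :
    IsSupportPoint (Prod.swap ⁻¹' D) q.swap a.swap := by
  refine ⟨h.1, fun b hb hne => ?_⟩
  rw [← b.swap_swap, dot_swap, dot_swap]
  exact h.2 _ hb fun h' => hne (by rw [← h', Prod.swap_swap])

lemma eventually_exists_mem_segment_snd_eq_fst_lt (hq : 0 < q.1)
    (hBa : B.2 < a.2) (haT : a.2 < T.2) (hB : dot B q < dot a q) (hT : dot T q < dot a q) :
    ∀ᶠ p in 𝓝 a, ∃ b ∈ segment ℝ B T, b.2 = p.2 ∧ b.1 < p.1 := by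
  set chord : ℝ → ℝ × ℝ := fun y =>
    (1 - (y - B.2) / (T.2 - B.2)) • B + ((y - B.2) / (T.2 - B.2)) • T with hchord
  have hTB : T.2 - B.2 ≠ 0 := by linarith
  have hchord_snd : ∀ y, (chord y).2 = y := by
    intro y
    simp only [hchord, Prod.snd_add, Prod.smul_snd, smul_eq_mul]
    field_simp
    ring
  have hchord_mem : ∀ y, B.2 ≤ y → y ≤ T.2 → chord y ∈ segment ℝ B T := by
    intro y hy hy'
    refine ⟨_, _, ?_, div_nonneg (by linarith) (by linarith), by ring, rfl⟩
    rw [sub_nonneg]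
    exact div_le_one_of_le₀ (by linarith) (by linarith)
  have hchord_a : (chord a.2).1 < a.1 := by
    set s := (a.2 - B.2) / (T.2 - B.2)
    have hs₀ : 0 ≤ s := div_nonneg (by linarith) (by linarith)
    have hs₁ : s ≤ 1 := div_le_one_of_le₀ (by linarith) (by linarith)
    have hdot : dot (chord a.2) q < dot a q := by
      change dot ((1 - s) • B + s • T) q < dot a q
      rw [dot_smul_add_smul]
      nlinarith [mul_le_mul_of_nonneg_left hB.le (sub_nonneg.2 hs₁),
        mul_le_mul_of_nonneg_left hT.le hs₀]
    simp only [dot] at hdot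
    rw [hchord_snd] at hdot
    exact lt_of_mul_lt_mul_right (by linarith) hq.le
  have hcont : Continuous fun p : ℝ × ℝ => (chord p.2).1 := by
    simp only [hchord]
    fun_prop
  filter_upwards [continuous_const.continuousAt.eventually_lt continuous_snd.continuousAt hBa,
    continuous_snd.continuousAt.eventually_lt continuous_const.continuousAt haT,
    hcont.continuousAt.eventually_lt continuous_fst.continuousAt hchord_a] with p hp₁ hp₂ hp₃
  exact ⟨chord p.2, hchord_mem p.2 hp₁.le hp₂.le, hchord_snd p.2, hp₃⟩

/-- `a ≠ B`, since otherwise `R` would beat `a` in the direction `q`; hence the chord `[B, T]`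
passes strictly left of `a`. -/
lemma IsSupportPoint.eventually_exists_left (hD : Convex ℝ D) (ha : IsSupportPoint D q a)
    (hq₁ : 0 < q.1) (hq₂ : 0 ≤ q.2) (hT : IsSupportPoint D (0, 1) T)
    (hB : IsSupportPoint D (0, -1) B) (hR : IsSupportPoint D (1, 0) R)
    (haT : a ≠ T) (haR : a ≠ R) :
    ∀ᶠ p in 𝓝 a, ∃ b ∈ D, b.2 = p.2 ∧ b.1 ≤ p.1 := by
  have haR₁ : a.1 < R.1 := by simpa [dot] using hR.2 a ha.1 haR
  have haB : a ≠ B := by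
    rintro rfl
    have hRa₂ : a.2 < R.2 := by simpa [dot] using hB.2 R hR.1 (Ne.symm haR)
    have hRa := ha.2 R hR.1 (Ne.symm haR)
    simp only [dot] at hRa
    nlinarith [mul_lt_mul_of_pos_left haR₁ hq₁, mul_le_mul_of_nonneg_left hRa₂.le hq₂]
  have hBa₂ : B.2 < a.2 := by simpa [dot] using hB.2 a ha.1 haB
  have haT₂ : a.2 < T.2 := by simpa [dot] using hT.2 a ha.1 haT
  filter_upwards [eventually_exists_mem_segment_snd_eq_fst_lt hq₁ hBa₂ haT₂
    (ha.2 B hB.1 (Ne.symm haB)) (ha.2 T hT.1 (Ne.symm haT))] with p ⟨b, hb, hb₂, hb₁⟩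
  exact ⟨b, hD.segment_subset hB.1 hT.1 hb, hb₂, hb₁.le⟩

lemma IsSupportPoint.eventually_exists_below (hD : Convex ℝ D) (ha : IsSupportPoint D q a)
    (hq₁ : 0 ≤ q.1) (hq₂ : 0 < q.2) (hR : IsSupportPoint D (1, 0) R)
    (hL : IsSupportPoint D (-1, 0) L) (hT : IsSupportPoint D (0, 1) T)
    (haR : a ≠ R) (haT : a ≠ T) :
    ∀ᶠ p in 𝓝 a, ∃ c ∈ D, c.1 = p.1 ∧ c.2 ≤ p.2 := by
  have hswap := ha.swap.eventually_exists_left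
    (hD.is_linear_preimage ⟨fun _ _ => rfl, fun _ _ => rfl⟩) hq₂ hq₁ hR.swap hL.swap hT.swap
    (Prod.swap_injective.ne haR) (Prod.swap_injective.ne haT)
  filter_upwards [(continuous_swap.tendsto a).eventually hswap] with p ⟨b, hb, hb₂, hb₁⟩
  exact ⟨b.swap, hb, hb₂, hb₁⟩

end SupportPoints

lemma fst_pos_of_mem_Spos {q : ℝ × ℝ} (hq : q ∈ Spos) (hne : q ≠ (0, 1)) : 0 < q.1 := by
  obtain ⟨hq₁, hq₂, hnorm⟩ := hq
  refine hq₁.lt_of_ne fun h => hne (Prod.ext h.symm ?_)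
  rw [norE, ← h, zero_pow two_ne_zero, zero_add, Real.sqrt_sq hq₂] at hnorm
  exact hnorm

lemma swap_mem_Spos {q : ℝ × ℝ} (hq : q ∈ Spos) : q.swap ∈ Spos :=
  ⟨hq.2.1, hq.1, by rw [← hq.2.2, norE, norE, add_comm]; rfl⟩

theorem finiteness_near_noncritical_points_general
    (μ : ℤ × ℤ → ℝ≥0∞)
    (aOf : ℝ × ℝ → ℝ × ℝ) (haOf : IsDirMap μ aOf)
    (a : ℝ × ℝ) (ha : a ∈ GammaPlus aOf)
    (ha1 : a ≠ aOf ((1 : ℝ), (0 : ℝ))) (ha2 : a ≠ aOf ((0 : ℝ), (1 : ℝ))) :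
    ∃ U : Set (ℝ × ℝ), IsOpen U ∧ a ∈ U ∧
      ∀ a' ∈ U, ∀ z ∈ quadrant,
        Eexit μ quadrant z (fun w => ENNReal.ofReal (Real.exp (dot a' (toR w)))) < ⊤ := by
  obtain ⟨q, hq, rfl⟩ := ha
  have hq₁ : 0 < q.1 := fst_pos_of_mem_Spos hq fun h => ha2 (by rw [h])
  have hq₂ : 0 < q.2 :=
    fst_pos_of_mem_Spos (swap_mem_Spos hq) fun h => ha1 (by rw [← q.swap_swap, h]; rfl)
  have ha := haOf.isSupportPoint (q := q) fun h => by simp [h] at hq₁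
  have hleft := ha.eventually_exists_left (convex_jumpGF_le_one μ) hq₁ hq₂.le
    (haOf.isSupportPoint (by simp)) (haOf.isSupportPoint (by simp))
    (haOf.isSupportPoint (by simp)) ha2 ha1
  have hbelow := ha.eventually_exists_below (convex_jumpGF_le_one μ) hq₁.le hq₂
    (haOf.isSupportPoint (by simp)) (haOf.isSupportPoint (by simp))
    (haOf.isSupportPoint (by simp)) ha1 ha2
  obtain ⟨U, hU, hUo, haU⟩ := eventually_nhds_iff.1 (hleft.and hbelow)
  refine ⟨U, hUo, haU, fun p hp z _ => ?_⟩
  obtain ⟨⟨b, hb, hb₂, hb₁⟩, ⟨c, hc, hc₁, hc₂⟩⟩ := hU p hp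
  exact Eexit_quadrant_expDot_lt_top hb hb₂ hb₁ hc hc₁ hc₂ z

/-- **Proposition 3.2.**  Under (H1) and (H3), every noncritical point `a` of `Γ₊`
(i.e. `a ∉ {a(1,0), a(0,1)}`) has an open neighborhood on which the functions
`a' ↦ E_z(exp(a'·S(τ)); τ < ∞)` are finite for all `z ∈ ℕ*×ℕ*`. -/
theorem finiteness_near_noncritical_points
    (μ : ℤ × ℤ → ℝ≥0∞) (hprob : ∑' z : ℤ × ℤ, μ z = 1)
    (h1 : H1 μ) (h3 : H3 μ)
    (aOf : ℝ × ℝ → ℝ × ℝ) (haOf : IsDirMap μ aOf)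
    (a : ℝ × ℝ) (ha : a ∈ GammaPlus aOf)
    (ha1 : a ≠ aOf ((1 : ℝ), (0 : ℝ))) (ha2 : a ≠ aOf ((0 : ℝ), (1 : ℝ))) :
    ∃ U : Set (ℝ × ℝ), IsOpen U ∧ a ∈ U ∧
      ∀ a' ∈ U, ∀ z ∈ quadrant,
        Eexit μ quadrant z (fun w => ENNReal.ofReal (Real.exp (dot a' (toR w)))) < ⊤ :=
  finiteness_near_noncritical_points_general μ aOf haOf a ha ha1 ha2

end KRWQ
end

section
/- Under hypotheses (H1) and (H3), the critical point a(1,0) has an open neighborhood U ⊂ ℝ² such that for every a ∈ U and every z ∈ ℕ*×ℕ*, the quantity E_z(exp(a·S(τ)); τ = τ₁ < τ₂) is finite. Moreover, for every δ > 0 small enough there is a point â = (â₁, â₂) ∈ ∂D with â₁ < a(1,0)₁ and â₂ = a(1,0)₂ + δ such that E_z(exp(a(1,0)·S(τ) + δ S₂(τ)); τ = τ₁ < τ₂) ≤ exp(â·z) for all z ∈ ℕ*×ℕ*. -/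
open scoped ENNReal Classical
open Filter

namespace KRWQ

/-!
For `b ∈ D` the process `exp(b·S(n))` is a supermartingale, so
`E_z(exp(b·S(τ)); τ < ∞) ≤ exp(b·z)`. On the event `τ = τ₁ < τ₂` the exit point `w` satisfies
`w₁ ≤ 0 < w₂`, hence `a·w ≤ b·w` whenever `b₁ ≤ a₁` and `a₂ ≤ b₂`. It therefore suffices to find
points `â ∈ ∂D` with `â₁ < a(1,0)₁` and `â₂ = a(1,0)₂ + δ`. By convexity of `D` these exist as soon
as `D` has a point above `a(1,0)`; if it had none, `∇φ(a(1,0))` would vanish, `a(1,0)` would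
minimize `φ`, and then the mean `m = ∇φ(0)` would vanish too.
-/

section Exit

variable {G : Type*} [AddCommGroup G] {μ e : G → ℝ≥0∞}

lemma tsum_conv_mul_eq (he : ∀ v d, e (v + d) = e v * e d) (p : G → ℝ≥0∞) :
    ∑' w, (∑' v, p v * μ (w - v)) * e w = (∑' v, p v * e v) * ∑' d, μ d * e d := by
  calc ∑' w, (∑' v, p v * μ (w - v)) * e w
      = ∑' v, ∑' w, p v * e v * (μ (w - v) * e (w - v)) := by
        simp_rw [← ENNReal.tsum_mul_right]
        rw [ENNReal.tsum_comm]
        refine tsum_congr fun v => tsum_congr fun w => ?_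
        rw [← sub_add_cancel w v, he, add_sub_cancel_right]
        ring
    _ = ∑' v, p v * e v * ∑' d, μ d * e d := by
        refine tsum_congr fun v => ?_
        rw [ENNReal.tsum_mul_left, ← (Equiv.addRight v).tsum_eq]
        simp only [Equiv.coe_addRight, add_sub_cancel_right]
    _ = (∑' v, p v * e v) * ∑' d, μ d * e d := ENNReal.tsum_mul_right

lemma tsum_le_of_add_le {T X : ℕ → ℝ≥0∞} (h : ∀ n, T (n + 1) + X n ≤ T n) :
    ∑' n, X n ≤ T 0 := by
  have hsum : ∀ n, T n + ∑ k ∈ Finset.range n, X k ≤ T 0 := by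
    intro n
    induction n with
    | zero => simp
    | succ n ih =>
      calc T (n + 1) + ∑ k ∈ Finset.range (n + 1), X k
          = T (n + 1) + X n + ∑ k ∈ Finset.range n, X k := by
            rw [Finset.sum_range_succ]; ring
        _ ≤ T n + ∑ k ∈ Finset.range n, X k := by gcongr; exact h n
        _ ≤ T 0 := ih
  exact ENNReal.tsum_le_of_sum_range_le fun n => le_add_self.trans (hsum n)

/-- `e(S(n))` is a supermartingale, stopped at the exit time. -/
theorem Eexit_le (he : ∀ v d, e (v + d) = e v * e d) (hμe : ∑' d, μ d * e d ≤ 1)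
    (A : Set G) (z : G) : Eexit μ A z e ≤ e z := by
  set B : ℕ → G → ℝ≥0∞ := fun n u => ∑' v, nstepK μ A n z v * μ (u - v)
  set T : ℕ → ℝ≥0∞ := fun n => ∑' w, nstepK μ A n z w * e w
  have hT0 : T 0 = e z := by
    simp only [T, nstepK]
    rw [tsum_eq_single z fun w hw => by simp [hw]]
    simp
  have hstep : ∀ n, T (n + 1) + ∑' w, Aᶜ.indicator (B n) w * e w ≤ T n := by
    intro n
    calc T (n + 1) + ∑' w, Aᶜ.indicator (B n) w * e w
        = ∑' w, B n w * e w := by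
          simp only [T, B, nstepK, ← ENNReal.tsum_add, ← add_mul,
            Set.indicator_self_add_compl_apply]
      _ = T n * ∑' d, μ d * e d := tsum_conv_mul_eq he _
      _ ≤ T n := mul_le_of_le_one_right' hμe
  calc Eexit μ A z e = ∑' n, ∑' w, Aᶜ.indicator (B n) w * e w := by
        rw [Eexit, ENNReal.tsum_comm]
        refine tsum_congr fun w => ?_
        by_cases hw : w ∈ A
        · simp [exitK, hw]
        · simp [exitK, hw, B, ENNReal.tsum_mul_right]
    _ ≤ T 0 := tsum_le_of_add_le hstep
    _ = e z := hT0

end Exit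

lemma Eexit1_le_Eexit {μ f g : ℤ × ℤ → ℝ≥0∞}
    (hfg : ∀ w : ℤ × ℤ, w.1 ≤ 0 → 0 < w.2 → f w ≤ g w) (z : ℤ × ℤ) :
    Eexit1 μ z f ≤ Eexit μ quadrant z g := by
  refine ENNReal.tsum_le_tsum fun w => ?_
  split_ifs with hw
  · exact mul_le_mul_right (hfg w hw.1 hw.2) _
  · exact zero_le

lemma dot_toR_add (a : ℝ × ℝ) (v d : ℤ × ℤ) :
    dot a (toR (v + d)) = dot a (toR v) + dot a (toR d) := by
  simp only [dot, toR, Prod.fst_add, Prod.snd_add, Int.cast_add]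
  ring

lemma Eexit_exp_le {μ : ℤ × ℤ → ℝ≥0∞} {a : ℝ × ℝ} (ha : jumpGF μ a ≤ 1)
    (A : Set (ℤ × ℤ)) (z : ℤ × ℤ) :
    Eexit μ A z (fun w => ENNReal.ofReal (Real.exp (dot a (toR w))))
      ≤ ENNReal.ofReal (Real.exp (dot a (toR z))) :=
  Eexit_le (fun v d => by rw [dot_toR_add, Real.exp_add, ENNReal.ofReal_mul (Real.exp_nonneg _)])
    ha A z

lemma dot_toR_le_of_fst_nonpos {a b : ℝ × ℝ} (h1 : b.1 ≤ a.1) (h2 : a.2 ≤ b.2) {w : ℤ × ℤ}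
    (hw1 : w.1 ≤ 0) (hw2 : 0 ≤ w.2) : dot a (toR w) ≤ dot b (toR w) := by
  have hw1' : (w.1 : ℝ) ≤ 0 := by exact_mod_cast hw1
  have hw2' : (0 : ℝ) ≤ w.2 := by exact_mod_cast hw2
  simp only [dot, toR]
  nlinarith

lemma Eexit1_exp_le {μ : ℤ × ℤ → ℝ≥0∞} {a b : ℝ × ℝ} (hb : jumpGF μ b ≤ 1) (h1 : b.1 ≤ a.1)
    (h2 : a.2 ≤ b.2) (z : ℤ × ℤ) :
    Eexit1 μ z (fun w => ENNReal.ofReal (Real.exp (dot a (toR w))))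
      ≤ ENNReal.ofReal (Real.exp (dot b (toR z))) :=
  (Eexit1_le_Eexit (fun _ hw1 hw2 => ENNReal.ofReal_le_ofReal <| Real.exp_le_exp.mpr <|
    dot_toR_le_of_fst_nonpos h1 h2 hw1 hw2.le) z).trans (Eexit_exp_le hb quadrant z)

section JumpGF

variable {μ : ℤ × ℤ → ℝ≥0∞}

noncomputable def jumpGFReal (μ : ℤ × ℤ → ℝ≥0∞) (a : ℝ × ℝ) : ℝ :=
  ∑' z : ℤ × ℤ, (μ z).toReal * Real.exp (dot a (toR z))

noncomputable def gradJumpGF (μ : ℤ × ℤ → ℝ≥0∞) (x : ℝ × ℝ) : ℝ × ℝ :=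
  (∑' z : ℤ × ℤ, (z.1 : ℝ) * ((μ z).toReal * Real.exp (dot x (toR z))),
    ∑' z : ℤ × ℤ, (z.2 : ℝ) * ((μ z).toReal * Real.exp (dot x (toR z))))

lemma dot_add_smul (x d w : ℝ × ℝ) (s : ℝ) : dot (x + s • d) w = dot x w + s * dot d w := by
  simp only [dot, Prod.fst_add, Prod.snd_add, Prod.smul_fst, Prod.smul_snd, smul_eq_mul]
  ring

lemma H3.ne_top (h3 : H3 μ) (z : ℤ × ℤ) : μ z ≠ ⊤ := by
  have h := (h3 0).ne
  simp only [jumpGF, dot, Prod.fst_zero, Prod.snd_zero, zero_mul, add_zero, Real.exp_zero,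
    ENNReal.ofReal_one, mul_one] at h
  exact ENNReal.ne_top_of_tsum_ne_top h z

lemma summable_jumpGFReal (h3 : H3 μ) (a : ℝ × ℝ) :
    Summable fun z : ℤ × ℤ => (μ z).toReal * Real.exp (dot a (toR z)) := by
  simpa [ENNReal.toReal_mul, ENNReal.toReal_ofReal (Real.exp_nonneg _)] using
    ENNReal.summable_toReal (h3 a).ne

lemma jumpGF_eq_ofReal (h3 : H3 μ) (a : ℝ × ℝ) :
    jumpGF μ a = ENNReal.ofReal (jumpGFReal μ a) := by
  rw [← ENNReal.ofReal_toReal (h3 a).ne, jumpGF,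
    ENNReal.tsum_toReal_eq fun z => ENNReal.mul_ne_top (h3.ne_top z) ENNReal.ofReal_ne_top]
  simp only [jumpGFReal, ENNReal.toReal_mul, ENNReal.toReal_ofReal (Real.exp_nonneg _)]

lemma jumpGF_le_one_iff (h3 : H3 μ) (a : ℝ × ℝ) : jumpGF μ a ≤ 1 ↔ jumpGFReal μ a ≤ 1 := by
  rw [jumpGF_eq_ofReal h3, ENNReal.ofReal_le_one]

lemma jumpGF_eq_one_iff (h3 : H3 μ) (a : ℝ × ℝ) : jumpGF μ a = 1 ↔ jumpGFReal μ a = 1 := by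
  rw [jumpGF_eq_ofReal h3, ENNReal.ofReal_eq_one]

lemma jumpGFReal_zero (hprob : ∑' z : ℤ × ℤ, μ z = 1) (h3 : H3 μ) : jumpGFReal μ 0 = 1 := by
  simp only [jumpGFReal, dot, Prod.fst_zero, Prod.snd_zero, zero_mul, add_zero, Real.exp_zero,
    mul_one]
  rw [← ENNReal.tsum_toReal_eq h3.ne_top, hprob, ENNReal.toReal_one]

lemma gradJumpGF_zero :
    gradJumpGF μ 0 =
      (∑' z : ℤ × ℤ, (z.1 : ℝ) * (μ z).toReal, ∑' z : ℤ × ℤ, (z.2 : ℝ) * (μ z).toReal) := by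
  simp [gradJumpGF, dot]

lemma convexOn_jumpGFReal (h3 : H3 μ) : ConvexOn ℝ Set.univ (jumpGFReal μ) := by
  refine ⟨convex_univ, fun x _ y _ p q hp hq hpq => ?_⟩
  have hx := (summable_jumpGFReal h3 x).mul_left p
  have hy := (summable_jumpGFReal h3 y).mul_left q
  calc jumpGFReal μ (p • x + q • y)
      ≤ ∑' z : ℤ × ℤ, (p * ((μ z).toReal * Real.exp (dot x (toR z)))
          + q * ((μ z).toReal * Real.exp (dot y (toR z)))) := by
        refine (summable_jumpGFReal h3 _).tsum_le_tsum (fun z => ?_) (hx.add hy)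
        have hdot : dot (p • x + q • y) (toR z) = p • dot x (toR z) + q • dot y (toR z) := by
          simp only [dot, Prod.fst_add, Prod.snd_add, Prod.smul_fst, Prod.smul_snd, smul_eq_mul]
          ring
        have hexp := convexOn_exp.2 (Set.mem_univ (dot x (toR z)))
          (Set.mem_univ (dot y (toR z))) hp hq hpq
        rw [hdot]
        simp only [smul_eq_mul] at hexp ⊢
        nlinarith [mul_le_mul_of_nonneg_left hexp (ENNReal.toReal_nonneg (a := μ z))]
    _ = p • jumpGFReal μ x + q • jumpGFReal μ y := by
        rw [hx.tsum_add hy, tsum_mul_left, tsum_mul_left]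
        rfl

lemma abs_mul_exp_abs_le (u : ℝ) : |u| * Real.exp |u| ≤ Real.exp (2 * u) + Real.exp (-(2 * u)) := by
  have hu : |u| ≤ Real.exp |u| := by linarith [Real.add_one_le_exp |u|]
  have hsq : |u| * Real.exp |u| ≤ Real.exp (2 * |u|) := by
    rw [two_mul, Real.exp_add]
    exact mul_le_mul_of_nonneg_right hu (Real.exp_nonneg _)
  rcases abs_cases u with ⟨h, _⟩ | ⟨h, _⟩ <;> rw [h] at hsq ⊢
  · linarith [Real.exp_nonneg (-(2 * u))]
  · rw [mul_neg] at hsq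
    linarith [Real.exp_nonneg (2 * u)]

lemma summable_mul_abs_mul_exp_abs (h3 : H3 μ) (x d : ℝ × ℝ) :
    Summable fun z : ℤ × ℤ => (μ z).toReal * Real.exp (dot x (toR z)) *
      (|dot d (toR z)| * Real.exp |dot d (toR z)|) := by
  refine Summable.of_nonneg_of_le (fun z => by positivity) (fun z => ?_)
    ((summable_jumpGFReal h3 (x + (2 : ℝ) • d)).add (summable_jumpGFReal h3 (x + (-2 : ℝ) • d)))
  rw [dot_add_smul, dot_add_smul, Real.exp_add, Real.exp_add, neg_mul]
  nlinarith [mul_le_mul_of_nonneg_left (abs_mul_exp_abs_le (dot d (toR z)))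
    (by positivity : 0 ≤ (μ z).toReal * Real.exp (dot x (toR z)))]

lemma summable_dot_mul (h3 : H3 μ) (x d : ℝ × ℝ) :
    Summable fun z : ℤ × ℤ => dot d (toR z) * ((μ z).toReal * Real.exp (dot x (toR z))) := by
  refine (summable_mul_abs_mul_exp_abs h3 x d).of_norm_bounded fun z => ?_
  have hν : 0 ≤ (μ z).toReal * Real.exp (dot x (toR z)) := by positivity
  rw [Real.norm_eq_abs, abs_mul, abs_of_nonneg hν, mul_comm]
  exact mul_le_mul_of_nonneg_left
    (le_mul_of_one_le_right (abs_nonneg _) (Real.one_le_exp (abs_nonneg _))) hν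

lemma dot_gradJumpGF (h3 : H3 μ) (x d : ℝ × ℝ) :
    dot (gradJumpGF μ x) d =
      ∑' z : ℤ × ℤ, dot d (toR z) * ((μ z).toReal * Real.exp (dot x (toR z))) := by
  set ν := fun z : ℤ × ℤ => (μ z).toReal * Real.exp (dot x (toR z))
  have h1 : Summable fun z : ℤ × ℤ => (z.1 : ℝ) * ν z := by
    simpa [ν, dot, toR] using summable_dot_mul h3 x (1, 0)
  have h2 : Summable fun z : ℤ × ℤ => (z.2 : ℝ) * ν z := by
    simpa [ν, dot, toR] using summable_dot_mul h3 x (0, 1)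
  calc dot (gradJumpGF μ x) d = d.1 * ∑' z, (z.1 : ℝ) * ν z + d.2 * ∑' z, (z.2 : ℝ) * ν z := by
        simp only [dot, gradJumpGF, ν]
        ring
    _ = ∑' z, (d.1 * ((z.1 : ℝ) * ν z) + d.2 * ((z.2 : ℝ) * ν z)) := by
        rw [(h1.mul_left d.1).tsum_add (h2.mul_left d.2), tsum_mul_left, tsum_mul_left]
    _ = ∑' z, dot d (toR z) * ν z := tsum_congr fun z => by simp only [dot, toR]; ring

end JumpGF

section Gradient

variable {μ : ℤ × ℤ → ℝ≥0∞}

lemma hasDerivAt_jumpGFReal_line (h3 : H3 μ) (x d : ℝ × ℝ) :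
    HasDerivAt (fun s : ℝ => jumpGFReal μ (x + s • d)) (dot (gradJumpGF μ x) d) 0 := by
  set ν := fun z : ℤ × ℤ => (μ z).toReal * Real.exp (dot x (toR z))
  set u := fun z : ℤ × ℤ => dot d (toR z)
  have hline : (fun s : ℝ => jumpGFReal μ (x + s • d)) =
      fun s => ∑' z, ν z * Real.exp (s * u z) := by
    funext s
    refine tsum_congr fun z => ?_
    rw [dot_add_smul, Real.exp_add]
    ring
  have hbound : ∀ z, ∀ s ∈ Set.Ioo (-1 : ℝ) 1,
      ‖ν z * (Real.exp (s * u z) * u z)‖ ≤ ν z * (|u z| * Real.exp |u z|) := by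
    intro z s hs
    have hsu : s * u z ≤ |u z| := by
      calc s * u z ≤ |s * u z| := le_abs_self _
        _ = |s| * |u z| := abs_mul _ _
        _ ≤ |u z| := mul_le_of_le_one_left (abs_nonneg _) (abs_le.mpr ⟨hs.1.le, hs.2.le⟩)
    have hν : 0 ≤ ν z := by positivity
    rw [norm_mul, Real.norm_of_nonneg hν, norm_mul, Real.norm_of_nonneg (Real.exp_nonneg _),
      Real.norm_eq_abs, mul_comm (Real.exp _)]
    gcongr
  have hderiv := hasDerivAt_tsum_of_isPreconnected (summable_mul_abs_mul_exp_abs h3 x d)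
    isOpen_Ioo isPreconnected_Ioo
    (fun z s _ => ((hasDerivAt_mul_const (u z)).exp).const_mul (ν z)) hbound
    (by norm_num : (0 : ℝ) ∈ Set.Ioo (-1) 1) (by simpa [ν] using summable_jumpGFReal h3 x)
    (by norm_num : (0 : ℝ) ∈ Set.Ioo (-1) 1)
  rw [hline, dot_gradJumpGF h3]
  refine hderiv.congr_deriv (tsum_congr fun z => ?_)
  rw [zero_mul, Real.exp_zero, one_mul, mul_comm]

lemma dot_gradJumpGF_sub_le (h3 : H3 μ) (x y : ℝ × ℝ) :
    dot (gradJumpGF μ x) (y - x) ≤ jumpGFReal μ y - jumpGFReal μ x := by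
  refine le_of_tendsto (hasDerivAt_jumpGFReal_line h3 x (y - x)).tendsto_slope_zero_right ?_
  filter_upwards [Ioo_mem_nhdsGT (zero_lt_one' ℝ)] with s hs
  have hconv := (convexOn_jumpGFReal h3 (μ := μ)).2 (Set.mem_univ x) (Set.mem_univ y)
    (sub_nonneg.mpr hs.2.le) hs.1.le (sub_add_cancel 1 s)
  have hpt : (1 - s) • x + s • y = x + s • (y - x) := by module
  rw [hpt, smul_eq_mul, smul_eq_mul] at hconv
  rw [zero_add, zero_smul, add_zero, smul_eq_mul, inv_mul_le_iff₀ hs.1]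
  linarith

lemma dot_gradJumpGF_nonneg (h3 : H3 μ) {x d : ℝ × ℝ}
    (h : ∀ s : ℝ, 0 < s → jumpGFReal μ x ≤ jumpGFReal μ (x + s • d)) :
    0 ≤ dot (gradJumpGF μ x) d := by
  refine ge_of_tendsto (hasDerivAt_jumpGFReal_line h3 x d).tendsto_slope_zero_right ?_
  filter_upwards [self_mem_nhdsWithin] with s (hs : 0 < s)
  rw [zero_add, zero_smul, add_zero]
  exact smul_nonneg (inv_nonneg.mpr hs.le) (sub_nonneg.mpr (h s hs))

end Gradient

section Geometry

lemma eq_zero_of_dot_nonneg {g : ℝ × ℝ} (h : ∀ d : ℝ × ℝ, 0 < d.1 ∨ 0 < d.2 → 0 ≤ dot g d) :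
    g = 0 := by
  have h1 : 0 ≤ g.1 := by simpa [dot] using h (1, 0) (Or.inl one_pos)
  have h2 : 0 ≤ g.2 := by simpa [dot] using h (0, 1) (Or.inr one_pos)
  have h1' : g.1 ≤ 0 := by
    by_contra! hg
    have := h (-(g.2 + 1), g.1) (Or.inr hg)
    simp only [dot] at this
    nlinarith
  have h2' : g.2 ≤ 0 := by
    by_contra! hg
    have := h (g.2, -(g.1 + 1)) (Or.inl hg)
    simp only [dot] at this
    nlinarith
  exact Prod.ext (le_antisymm h1' h1) (le_antisymm h2' h2)

/-- Walk from `a` towards `c` up to height `a₂ + δ`, then to the right until `F` reaches `1`. -/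
lemma exists_eq_one_fst_lt_snd_eq {F : ℝ × ℝ → ℝ} (hF : ConvexOn ℝ Set.univ F) {a c : ℝ × ℝ}
    (ha : F a ≤ 1) (hmax : ∀ b, F b ≤ 1 → b ≠ a → b.1 < a.1) (hc : F c ≤ 1) {δ : ℝ}
    (hδ : 0 < δ) (hδc : δ ≤ c.2 - a.2) :
    ∃ b, F b = 1 ∧ b.1 < a.1 ∧ b.2 = a.2 + δ := by
  have hca : 0 < c.2 - a.2 := hδ.trans_le hδc
  obtain ⟨-, hp⟩ : a + (δ / (c.2 - a.2)) • (c - a) ∈ {x ∈ Set.univ | F x ≤ 1} :=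
    (hF.convex_le 1).add_smul_sub_mem ⟨trivial, ha⟩ ⟨trivial, hc⟩
      ⟨by positivity, (div_le_one hca).mpr hδc⟩
  set p := a + (δ / (c.2 - a.2)) • (c - a)
  have hp2 : p.2 = a.2 + δ := by
    simp only [p, Prod.snd_add, Prod.smul_snd, Prod.snd_sub, smul_eq_mul]
    field_simp
  have hne : ∀ x : ℝ, (x, p.2) ≠ a := fun x h => by
    have := congrArg Prod.snd h
    simp only at this
    linarith
  have hcont : Continuous fun x : ℝ => F (x, p.2) :=
    (continuousOn_univ.mp (hF.continuousOn isOpen_univ)).comp (.prodMk_left _)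
  have hp1 : p.1 ≤ a.1 := (hmax p hp (hne p.1)).le
  have hFa : 1 ≤ F (a.1, p.2) := by
    by_contra! h
    exact lt_irrefl _ (hmax (a.1, p.2) h.le (hne a.1))
  obtain ⟨x, -, hx⟩ := intermediate_value_Icc hp1 hcont.continuousOn ⟨hp, hFa⟩
  exact ⟨(x, p.2), hx, hmax _ hx.le (hne x), hp2⟩

end Geometry

/-- If the point `a` of `∂D` with the largest first coordinate were also highest in `D`, then
`∇φ(a) = 0`; by convexity `a` would minimize `φ`, so `φ ≥ 1 = φ(0)` and the mean `∇φ(0)` would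
vanish. -/
lemma exists_jumpGFReal_le_one_snd_gt {μ : ℤ × ℤ → ℝ≥0∞} (hprob : ∑' z : ℤ × ℤ, μ z = 1)
    (h1 : H1 μ) (h3 : H3 μ) {a : ℝ × ℝ} (ha : jumpGFReal μ a = 1)
    (hmax : ∀ c, jumpGFReal μ c ≤ 1 → c ≠ a → c.1 < a.1) :
    ∃ c, jumpGFReal μ c ≤ 1 ∧ a.2 < c.2 := by
  by_contra! htop
  have hgrad_a : gradJumpGF μ a = 0 := by
    refine eq_zero_of_dot_nonneg fun d hd => dot_gradJumpGF_nonneg h3 fun s hs => ?_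
    by_contra! hlt
    have hle : jumpGFReal μ (a + s • d) ≤ 1 := ha ▸ hlt.le
    have hfst := hmax _ hle fun h => hlt.ne (congrArg _ h)
    have hsnd := htop _ hle
    simp only [Prod.fst_add, Prod.snd_add, Prod.smul_fst, Prod.smul_snd, smul_eq_mul] at hfst hsnd
    rcases hd with hd | hd <;> nlinarith
  have hmin : ∀ y, jumpGFReal μ 0 ≤ jumpGFReal μ (0 + y) := fun y => by
    have := dot_gradJumpGF_sub_le h3 a y
    rw [hgrad_a, jumpGFReal_zero hprob h3, zero_add] at *
    simp only [dot, Prod.fst_zero, Prod.snd_zero, zero_mul, add_zero] at this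
    linarith
  have hgrad_0 : gradJumpGF μ 0 = 0 :=
    eq_zero_of_dot_nonneg fun d _ => dot_gradJumpGF_nonneg h3 fun s _ => hmin _
  exact h1.2.2.2 (gradJumpGF_zero (μ := μ) ▸ hgrad_0)

/-- **Proposition 3.3.**  Under (H1) and (H3), the critical point `a(1,0)` has an open
neighborhood where the functions `a ↦ E_z(exp(a·S(τ)); τ = τ₁ < τ₂)` are finite for all
`z ∈ ℕ*×ℕ*`.  Moreover, for any `δ > 0` small enough there is a point
`â = (â₁,â₂) ∈ ∂D` with `â₁ < a(1,0)₁` and `â₂ = a(1,0)₂ + δ` such that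
`E_z(exp(a(1,0)·S(τ) + δ S₂(τ)); τ = τ₁ < τ₂) ≤ exp(â·z)` for all `z ∈ ℕ*×ℕ*`. -/
theorem finiteness_near_critical_point
    (μ : ℤ × ℤ → ℝ≥0∞) (hprob : ∑' z : ℤ × ℤ, μ z = 1)
    (h1 : H1 μ) (h3 : H3 μ)
    (aOf : ℝ × ℝ → ℝ × ℝ) (haOf : IsDirMap μ aOf) :
    (∃ U : Set (ℝ × ℝ), IsOpen U ∧ aOf ((1 : ℝ), (0 : ℝ)) ∈ U ∧
      ∀ a ∈ U, ∀ z ∈ quadrant,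
        Eexit1 μ z (fun w => ENNReal.ofReal (Real.exp (dot a (toR w)))) < ⊤) ∧
    (∃ δ₀ : ℝ, 0 < δ₀ ∧ ∀ δ : ℝ, 0 < δ → δ ≤ δ₀ →
      ∃ ahat : ℝ × ℝ, jumpGF μ ahat = 1 ∧
        ahat.1 < (aOf ((1 : ℝ), (0 : ℝ))).1 ∧
        ahat.2 = (aOf ((1 : ℝ), (0 : ℝ))).2 + δ ∧
        ∀ z ∈ quadrant,
          Eexit1 μ z (fun w =>
              ENNReal.ofReal
                (Real.exp (dot (aOf ((1 : ℝ), (0 : ℝ))) (toR w) + δ * (w.2 : ℝ)))) ≤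
            ENNReal.ofReal (Real.exp (dot ahat (toR z)))) := by
  obtain ⟨ha, ha_max⟩ := haOf (1, 0) (by simp)
  set a := aOf (1, 0)
  rw [jumpGF_eq_one_iff h3] at ha
  have hmax : ∀ c, jumpGFReal μ c ≤ 1 → c ≠ a → c.1 < a.1 := fun c hc hne => by
    simpa [dot] using ha_max c ((jumpGF_le_one_iff h3 c).mpr hc) hne
  obtain ⟨c, hc, hac⟩ := exists_jumpGFReal_le_one_snd_gt hprob h1 h3 ha hmax
  have hahat : ∀ δ, 0 < δ → δ ≤ c.2 - a.2 → ∃ b, jumpGF μ b = 1 ∧ b.1 < a.1 ∧ b.2 = a.2 + δ := by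
    intro δ hδ hδc
    simp_rw [jumpGF_eq_one_iff h3]
    exact exists_eq_one_fst_lt_snd_eq (convexOn_jumpGFReal h3) ha.le hmax hc hδ hδc
  refine ⟨?_, c.2 - a.2, sub_pos.mpr hac, fun δ hδ hδc => ?_⟩
  · obtain ⟨b, hb, hb1, hb2⟩ := hahat _ (sub_pos.mpr hac) le_rfl
    refine ⟨{x | b.1 < x.1 ∧ x.2 < b.2},
      (isOpen_lt continuous_const continuous_fst).inter (isOpen_lt continuous_snd continuous_const),
      ⟨hb1, by linarith⟩, fun x hx z _ => ?_⟩
    exact (Eexit1_exp_le hb.le hx.1.le hx.2.le z).trans_lt ENNReal.ofReal_lt_top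
  · obtain ⟨b, hb, hb1, hb2⟩ := hahat δ hδ hδc
    refine ⟨b, hb, hb1, hb2, fun z _ => ?_⟩
    have hshift : ∀ w : ℤ × ℤ, dot a (toR w) + δ * w.2 = dot (a.1, a.2 + δ) (toR w) :=
      fun w => by simp only [dot, toR]; ring
    simp_rw [hshift]
    exact Eexit1_exp_le (a := (a.1, a.2 + δ)) hb.le hb1.le hb2.ge z

end KRWQ
end

section
/- Let (ξ(t)) be a random walk on ℤ having zero mean and translation-invariant transition probabilities P(x,x') = P(0,x'−x) such that, for some δ > 0, ∑_x e^{−δx} P(0,x) < ∞ and ∑_x |x| P(0,x) < ∞. Let T₀ = inf{t ≥ 0 : ξ(t) ≤ 0}. Then the function f(x) = E_x(|ξ(T₀)|) is finite for every x ∈ ℕ*. -/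
open scoped ENNReal Classical
open Filter

namespace KRWQ

/-!
Put `ε = δ / 2`. Zero mean and strict convexity give `χ = E e^{-εX} > 1`, while
`M = E e^{-δX} < ∞`. For `B` large, `V(u) = (B - e^{-εu})⁺` is then a bounded Lyapunov
function on `ℕ*` with drift at most `-c e^{-εv}`, so summing along the killed walk gives
`∑ₙ E_x[e^{-εξ(n)}; n < T₀] ≤ V(x) / c < ∞`. A jump from `v > 0` to `w ≤ 0` has
`|w| ≤ (2/δ) e^{-δ(w - v)} e^{-εv}`, hence `E_x|ξ(T₀)| ≤ (2/δ) M ∑ₙ E_x[e^{-εξ(n)}; n < T₀]`.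
-/

open Real

section KilledWalk

variable {G : Type*} [AddCommGroup G] (μ : G → ℝ≥0∞) {A : Set G} {x : G}

theorem nstepK_eq_zero_of_notMem (hx : x ∈ A) {v : G} (hv : v ∉ A) :
    ∀ n, nstepK μ A n x v = 0
  | 0 => by simp [nstepK, show v ≠ x from fun h => hv (h ▸ hx)]
  | n + 1 => by simp [nstepK, Set.indicator_of_notMem hv]

theorem greenK_eq_zero_of_notMem (hx : x ∈ A) {v : G} (hv : v ∉ A) : greenK μ A x v = 0 := by
  simp [greenK, nstepK_eq_zero_of_notMem μ hx hv]

theorem tsum_greenK_mul_le_tsum_greenK_mul (hx : x ∈ A) {f f' : G → ℝ≥0∞}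
    (hf : ∀ v ∈ A, f v ≤ f' v) :
    ∑' v, greenK μ A x v * f v ≤ ∑' v, greenK μ A x v * f' v := by
  refine ENNReal.tsum_le_tsum fun v => ?_
  by_cases hv : v ∈ A
  · gcongr; exact hf v hv
  · simp [greenK_eq_zero_of_notMem μ hx hv]

theorem tsum_nstepK_succ_mul_le (n : ℕ) (V : G → ℝ≥0∞) :
    ∑' u, nstepK μ A (n + 1) x u * V u ≤
      ∑' v, nstepK μ A n x v * ∑' u, μ (u - v) * V u :=
  calc ∑' u, nstepK μ A (n + 1) x u * V u
      ≤ ∑' u, (∑' v, nstepK μ A n x v * μ (u - v)) * V u :=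
        ENNReal.tsum_le_tsum fun u => mul_le_mul_left (Set.indicator_le_self _ _ u) _
    _ = ∑' v, nstepK μ A n x v * ∑' u, μ (u - v) * V u := by
        simp_rw [← ENNReal.tsum_mul_right, ← ENNReal.tsum_mul_left, mul_assoc]
        exact ENNReal.tsum_comm

theorem tsum_greenK_mul_le_of_drift (V g : G → ℝ≥0∞)
    (hV : ∀ v ∈ A, (∑' u, μ (u - v) * V u) + g v ≤ V v) (hx : x ∈ A) :
    ∑' v, greenK μ A x v * g v ≤ V x := by
  have step : ∀ n, (∑' v, nstepK μ A (n + 1) x v * V v) + ∑' v, nstepK μ A n x v * g v ≤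
      ∑' v, nstepK μ A n x v * V v := fun n =>
    calc _ ≤ (∑' v, nstepK μ A n x v * ∑' u, μ (u - v) * V u) + ∑' v, nstepK μ A n x v * g v :=
          add_le_add_left (tsum_nstepK_succ_mul_le μ n V) _
      _ = ∑' v, nstepK μ A n x v * ((∑' u, μ (u - v) * V u) + g v) := by
          simp_rw [mul_add]; exact ENNReal.tsum_add.symm
      _ ≤ ∑' v, nstepK μ A n x v * V v := by
          refine ENNReal.tsum_le_tsum fun v => ?_
          by_cases hv : v ∈ A
          · gcongr; exact hV v hv
          · simp [nstepK_eq_zero_of_notMem μ hx hv]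
  have partial_sums : ∀ n, (∑' v, nstepK μ A n x v * V v) +
      ∑ k ∈ Finset.range n, ∑' v, nstepK μ A k x v * g v ≤ V x := by
    intro n
    induction n with
    | zero => simp [nstepK]
    | succ n ih =>
      rw [Finset.sum_range_succ, ← add_assoc, add_right_comm]
      exact (add_le_add_left (step n) _).trans ih
  calc ∑' v, greenK μ A x v * g v = ∑' n, ∑' v, nstepK μ A n x v * g v := by
        simp_rw [greenK, ← ENNReal.tsum_mul_right]; exact ENNReal.tsum_comm
    _ ≤ V x := ENNReal.tsum_le_of_sum_range_le fun n => le_add_self.trans (partial_sums n)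

theorem Eexit_eq_tsum_greenK_mul (f : G → ℝ≥0∞) :
    Eexit μ A x f = ∑' v, greenK μ A x v * ∑' w, μ (w - v) * Aᶜ.indicator f w :=
  calc Eexit μ A x f
      = ∑' w, ∑' n, ∑' v, nstepK μ A n x v * (μ (w - v) * Aᶜ.indicator f w) := by
        refine tsum_congr fun w => ?_
        rw [exitK, ← Set.indicator_mul_left, Set.indicator_mul_right]
        simp_rw [← ENNReal.tsum_mul_right, mul_assoc]
    _ = ∑' n, ∑' v, ∑' w, nstepK μ A n x v * (μ (w - v) * Aᶜ.indicator f w) := by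
        rw [ENNReal.tsum_comm]
        exact tsum_congr fun n => ENNReal.tsum_comm
    _ = ∑' v, ∑' n, ∑' w, nstepK μ A n x v * (μ (w - v) * Aᶜ.indicator f w) :=
        ENNReal.tsum_comm
    _ = ∑' v, greenK μ A x v * ∑' w, μ (w - v) * Aᶜ.indicator f w := by
        simp_rw [greenK, ← ENNReal.tsum_mul_right]
        simp_rw [← ENNReal.tsum_mul_left]

end KilledWalk

theorem hasSum_toReal_mul_of_tsum_ne_top {ι : Type*} {ν : ι → ℝ≥0∞} {r : ι → ℝ}
    (hr : ∀ i, 0 ≤ r i) (h : ∑' i, ν i * ENNReal.ofReal (r i) ≠ ⊤) :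
    HasSum (fun i => (ν i).toReal * r i) (∑' i, ν i * ENNReal.ofReal (r i)).toReal := by
  rw [ENNReal.tsum_toReal_eq (ENNReal.ne_top_of_tsum_ne_top h)]
  simpa only [ENNReal.toReal_mul, ENNReal.toReal_ofReal (hr _)] using
    (ENNReal.summable_toReal h).hasSum

theorem max_sub_zero_le_sub_add_sq_div {B t : ℝ} (hB : 0 < B) :
    max (B - t) 0 ≤ B - t + t ^ 2 / B := by
  have hsq : B - t + t ^ 2 / B = (B - t / 2) ^ 2 / B + 3 / 4 * (t ^ 2 / B) := by
    field_simp; ring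
  exact max_le (by linarith [show 0 ≤ t ^ 2 / B by positivity]) (by rw [hsq]; positivity)

theorem one_lt_of_hasSum_mul_exp {ι : Type*} {p X : ι → ℝ} {χ : ℝ} (hp0 : ∀ i, 0 ≤ p i)
    (hp : HasSum p 1) (hmean : HasSum (fun i => X i * p i) 0) {i₀ : ι} (hpi₀ : 0 < p i₀)
    (hXi₀ : X i₀ ≠ 0) (hχ : HasSum (fun i => p i * exp (X i)) χ) : 1 < χ := by
  have hlin : HasSum (fun i => p i * (X i + 1)) 1 := by
    simpa [mul_add, mul_comm] using hmean.add hp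
  refine hasSum_lt (i := i₀) (fun i => ?_) ?_ hlin hχ
  · exact mul_le_mul_of_nonneg_left (add_one_le_exp (X i)) (hp0 i)
  · exact mul_lt_mul_of_pos_left (add_one_lt_exp hXi₀) hpi₀

theorem tsum_mul_ofReal_sub_add_le {ι : Type*} {ν : ι → ℝ≥0∞} {e : ι → ℝ} {χ M B y : ℝ}
    (hν : ∀ i, ν i ≠ ⊤) (hp : HasSum (fun i => (ν i).toReal) 1)
    (hχ : HasSum (fun i => (ν i).toReal * e i) χ)
    (hM : HasSum (fun i => (ν i).toReal * e i ^ 2) M)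
    (hB : 0 < B) (hMB : 2 * M ≤ (χ - 1) * B) (hy0 : 0 ≤ y) (hy1 : y ≤ 1) :
    ∑' i, ν i * ENNReal.ofReal (B - y * e i) + ENNReal.ofReal ((χ - 1) / 2 * y) ≤
      ENNReal.ofReal (B - y) := by
  set q : ι → ℝ := fun i => B - y * e i + (y * e i) ^ 2 / B
  have hq : HasSum (fun i => (ν i).toReal * q i) (B - y * χ + y ^ 2 * M / B) := by
    have hfun : (fun i => (ν i).toReal * q i) = fun i => B * (ν i).toReal -
        y * ((ν i).toReal * e i) + y ^ 2 / B * ((ν i).toReal * e i ^ 2) := by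
      funext i; simp only [q]; ring
    rw [hfun, show B - y * χ + y ^ 2 * M / B = B * 1 - y * χ + y ^ 2 / B * M by ring]
    exact ((hp.mul_left B).sub (hχ.mul_left y)).add (hM.mul_left (y ^ 2 / B))
  have hq0 : ∀ i, 0 ≤ (ν i).toReal * q i := fun i =>
    mul_nonneg ENNReal.toReal_nonneg ((le_max_right _ _).trans (max_sub_zero_le_sub_add_sq_div hB))
  have hM0 : 0 ≤ M := hM.nonneg fun i => by positivity
  have hχ1 : 0 ≤ χ - 1 := by nlinarith
  have hyy : y ^ 2 * M / B ≤ (χ - 1) / 2 * y := by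
    rw [div_le_iff₀ hB]; nlinarith [mul_le_mul_of_nonneg_right hy1 hy0]
  calc ∑' i, ν i * ENNReal.ofReal (B - y * e i) + ENNReal.ofReal ((χ - 1) / 2 * y)
      ≤ ∑' i, ENNReal.ofReal ((ν i).toReal * q i) + ENNReal.ofReal ((χ - 1) / 2 * y) := by
        gcongr with i
        rw [ENNReal.ofReal_mul ENNReal.toReal_nonneg, ENNReal.ofReal_toReal (hν i)]
        gcongr
        exact (le_max_left _ _).trans (max_sub_zero_le_sub_add_sq_div hB)
    _ = ENNReal.ofReal (B - y * χ + y ^ 2 * M / B + (χ - 1) / 2 * y) := by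
        rw [← ENNReal.ofReal_tsum_of_nonneg hq0 hq.summable, hq.tsum_eq,
          ENNReal.ofReal_add (hq.nonneg hq0) (by positivity)]
    _ ≤ ENNReal.ofReal (B - y) := ENNReal.ofReal_le_ofReal (by nlinarith)

section HalfLine

variable {ν : ℤ → ℝ≥0∞}

theorem exists_drift_exp (hprob : ∑' s, ν s = 1)
    (hmean : HasSum (fun s : ℤ => (s : ℝ) * (ν s).toReal) 0) {s₀ : ℤ} (hs₀ : s₀ ≠ 0)
    (hνs₀ : ν s₀ ≠ 0) {δ : ℝ} (hδ : 0 < δ)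
    (hexp : ∑' s : ℤ, ν s * ENNReal.ofReal (exp (-δ * s)) ≠ ⊤) :
    ∃ B c : ℝ, 0 < c ∧ ∀ v : ℤ, 0 ≤ v →
      ∑' u, ν (u - v) * ENNReal.ofReal (B - exp (-(δ / 2) * u)) +
          ENNReal.ofReal c * ENNReal.ofReal (exp (-(δ / 2) * v)) ≤
        ENNReal.ofReal (B - exp (-(δ / 2) * v)) := by
  set e : ℤ → ℝ := fun s => exp (-(δ / 2) * s) with he
  have hν : ∀ s, ν s ≠ ⊤ := ENNReal.ne_top_of_tsum_ne_top (f := ν) (by simp [hprob])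
  have hp : HasSum (fun s => (ν s).toReal) 1 := by
    simpa [hprob] using hasSum_toReal_mul_of_tsum_ne_top (ν := ν) (r := fun _ => 1)
      (fun _ => zero_le_one) (by simp [hprob])
  obtain ⟨M, hM⟩ : ∃ M, HasSum (fun s => (ν s).toReal * e s ^ 2) M := by
    have he2 : ∀ s : ℤ, e s ^ 2 = exp (-δ * s) := fun s => by rw [he, ← exp_nat_mul]; ring_nf
    simp_rw [he2]
    exact ⟨_, hasSum_toReal_mul_of_tsum_ne_top (fun _ => (exp_pos _).le) hexp⟩
  obtain ⟨χ, hχ⟩ : Summable fun s => (ν s).toReal * e s :=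
    (hp.summable.add hM.summable).of_nonneg_of_le (fun s => by positivity) fun s => by
      nlinarith [mul_nonneg (ENNReal.toReal_nonneg (a := ν s))
        (show 0 ≤ 1 + e s ^ 2 - e s by nlinarith [sq_nonneg (e s - 1 / 2)])]
  have hχ1 : 1 < χ :=
    one_lt_of_hasSum_mul_exp (X := fun s : ℤ => -(δ / 2) * s) (fun _ => ENNReal.toReal_nonneg) hp
      (by simpa [mul_assoc] using hmean.mul_left (-(δ / 2)))
      (ENNReal.toReal_pos hνs₀ (hν s₀)) (by simp [hδ.ne', hs₀]) hχ
  have hM0 : 0 ≤ M := hM.nonneg fun s => by positivity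
  refine ⟨(2 * M + 1) / (χ - 1), (χ - 1) / 2, by linarith, fun v hv => ?_⟩
  have hshift : ∑' u, ν (u - v) * ENNReal.ofReal ((2 * M + 1) / (χ - 1) - e u) =
      ∑' s, ν s * ENNReal.ofReal ((2 * M + 1) / (χ - 1) - e v * e s) := by
    rw [← (Equiv.addRight v).tsum_eq]
    refine tsum_congr fun s => ?_
    simp only [Equiv.coe_addRight, add_sub_cancel_right, he, ← exp_add]
    push_cast; ring_nf
  rw [hshift, ← ENNReal.ofReal_mul (by linarith)]
  refine tsum_mul_ofReal_sub_add_le hν hp hχ hM (by positivity) ?_ (exp_pos _).le ?_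
  · rw [mul_div_cancel₀ _ (by linarith)]; linarith
  · have hv' : (0 : ℝ) ≤ v := by exact_mod_cast hv
    exact exp_le_one_iff.2 (by nlinarith)

theorem tsum_greenK_mul_exp_ne_top (hprob : ∑' s, ν s = 1)
    (hmean : HasSum (fun s : ℤ => (s : ℝ) * (ν s).toReal) 0) {s₀ : ℤ} (hs₀ : s₀ ≠ 0)
    (hνs₀ : ν s₀ ≠ 0) {δ : ℝ} (hδ : 0 < δ)
    (hexp : ∑' s : ℤ, ν s * ENNReal.ofReal (exp (-δ * s)) ≠ ⊤) {x : ℤ} (hx : 0 < x) :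
    ∑' v, greenK ν {y | 0 < y} x v * ENNReal.ofReal (exp (-(δ / 2) * v)) ≠ ⊤ := by
  obtain ⟨B, c, hc, hdrift⟩ := exists_drift_exp hprob hmean hs₀ hνs₀ hδ hexp
  have hpot := tsum_greenK_mul_le_of_drift (A := {y : ℤ | 0 < y}) ν _ _
    (fun v hv => hdrift v (le_of_lt hv)) hx
  simp_rw [mul_left_comm _ (ENNReal.ofReal c), ENNReal.tsum_mul_left] at hpot
  intro htop
  rw [htop, ENNReal.mul_top (by simpa using hc)] at hpot
  exact ENNReal.ofReal_ne_top (top_le_iff.1 hpot)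

theorem abs_le_two_div_mul_exp {δ w v : ℝ} (hδ : 0 < δ) (hw : w ≤ 0) (hwv : w ≤ v) :
    |w| ≤ 2 / δ * exp (-δ * (w - v)) * exp (-(δ / 2) * v) :=
  calc |w| = 2 / δ * (-(δ / 2) * w) := by rw [abs_of_nonpos hw]; field_simp
    _ ≤ 2 / δ * exp (-(δ / 2) * w) := by gcongr; linarith [add_one_le_exp (-(δ / 2) * w)]
    _ ≤ 2 / δ * exp (-δ * (w - v) + -(δ / 2) * v) := by gcongr; nlinarith
    _ = 2 / δ * exp (-δ * (w - v)) * exp (-(δ / 2) * v) := by rw [exp_add, mul_assoc]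

theorem tsum_mul_indicator_abs_le {δ : ℝ} (hδ : 0 < δ) {v : ℤ} (hv : 0 < v) :
    ∑' w, ν (w - v) * {y : ℤ | 0 < y}ᶜ.indicator (fun w => ENNReal.ofReal |(w : ℝ)|) w ≤
      ENNReal.ofReal (2 / δ) * (∑' s : ℤ, ν s * ENNReal.ofReal (exp (-δ * s))) *
        ENNReal.ofReal (exp (-(δ / 2) * v)) := by
  calc ∑' w, ν (w - v) * {y : ℤ | 0 < y}ᶜ.indicator (fun w => ENNReal.ofReal |(w : ℝ)|) w
      ≤ ∑' w, ν (w - v) * ENNReal.ofReal (exp (-δ * ((w - v : ℤ) : ℝ))) *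
          (ENNReal.ofReal (2 / δ) * ENNReal.ofReal (exp (-(δ / 2) * v))) := by
        refine ENNReal.tsum_le_tsum fun w => ?_
        by_cases hw : 0 < w
        · simp [hw]
        rw [Set.indicator_of_mem (by simpa using hw), mul_assoc]
        gcongr
        rw [← ENNReal.ofReal_mul (by positivity), ← ENNReal.ofReal_mul (exp_pos _).le]
        refine ENNReal.ofReal_le_ofReal ?_
        have hw' : (w : ℝ) ≤ 0 := by exact_mod_cast not_lt.1 hw
        have hwv : (w : ℝ) ≤ v := by exact_mod_cast (not_lt.1 hw).trans hv.le
        push_cast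
        linarith [abs_le_two_div_mul_exp hδ hw' hwv]
    _ = ENNReal.ofReal (2 / δ) * (∑' s : ℤ, ν s * ENNReal.ofReal (exp (-δ * s))) *
          ENNReal.ofReal (exp (-(δ / 2) * v)) := by
        rw [ENNReal.tsum_mul_right,
          show ∑' w, ν (w - v) * ENNReal.ofReal (exp (-δ * ((w - v : ℤ) : ℝ))) = _ from
            (Equiv.subRight v).tsum_eq fun s => ν s * ENNReal.ofReal (exp (-δ * s))]
        ring

end HalfLine

theorem overshoot_finite_expectation_general
    (ν : ℤ → ℝ≥0∞) (hprob : ∑' x : ℤ, ν x = 1)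
    (hmean_summable : Summable (fun x : ℤ => (x : ℝ) * (ν x).toReal))
    (hmean : ∑' x : ℤ, (x : ℝ) * (ν x).toReal = 0)
    (hexp : ∃ δ : ℝ, 0 < δ ∧
      (∑' x : ℤ, ν x * ENNReal.ofReal (Real.exp (-δ * (x : ℝ)))) < ⊤) :
    ∀ x : ℤ, 0 < x →
      (∑' w : ℤ, exitK ν {y : ℤ | 0 < y} x w * ENNReal.ofReal |(w : ℝ)|) < ⊤ := by
  obtain ⟨δ, hδ, hexp⟩ := hexp
  intro x hx
  change Eexit ν {y : ℤ | 0 < y} x (fun w : ℤ => ENNReal.ofReal |(w : ℝ)|) < ⊤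
  rw [Eexit_eq_tsum_greenK_mul]
  by_cases hmoves : ∃ s ≠ 0, ν s ≠ 0
  · obtain ⟨s₀, hs₀, hνs₀⟩ := hmoves
    calc _ ≤ ∑' v, greenK ν {y : ℤ | 0 < y} x v *
            (ENNReal.ofReal (2 / δ) * (∑' s : ℤ, ν s * ENNReal.ofReal (exp (-δ * s))) *
              ENNReal.ofReal (exp (-(δ / 2) * v))) :=
          tsum_greenK_mul_le_tsum_greenK_mul ν hx fun v hv => tsum_mul_indicator_abs_le hδ hv
      _ = ENNReal.ofReal (2 / δ) * (∑' s : ℤ, ν s * ENNReal.ofReal (exp (-δ * s))) *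
            ∑' v, greenK ν {y : ℤ | 0 < y} x v * ENNReal.ofReal (exp (-(δ / 2) * v)) := by
          simp_rw [mul_left_comm (greenK _ _ _ _), ENNReal.tsum_mul_left]
      _ < ⊤ := ENNReal.mul_lt_top (ENNReal.mul_lt_top ENNReal.ofReal_lt_top hexp)
          (tsum_greenK_mul_exp_ne_top hprob (hmean ▸ hmean_summable.hasSum) hs₀ hνs₀ hδ
            hexp.ne hx).lt_top
  · push Not at hmoves
    -- A walk that never moves never leaves the half-line.
    calc _ ≤ ∑' v, greenK ν {y : ℤ | 0 < y} x v * 0 := by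
          refine tsum_greenK_mul_le_tsum_greenK_mul (A := {y : ℤ | 0 < y}) ν hx fun v hv => ?_
          refine (ENNReal.tsum_eq_zero.2 fun w => ?_).le
          by_cases hw : 0 < w
          · simp [hw]
          · rw [hmoves (w - v) (by have : 0 < v := hv; omega), zero_mul]
      _ < ⊤ := by simp

/-- **Lemma 3.1.**  For a random walk `(ξ(t))` on `ℤ` with zero mean and
translation-invariant transition probabilities `P(x,x') = P(0,x'−x)` such that for some
`δ > 0`, `∑_x e^{−δx} P(0,x) < ∞` and `∑_x |x| P(0,x) < ∞`, the function
`f(x) = E_x(|ξ(T₀)|)` with `T₀ = inf{t ≥ 0 : ξ(t) ≤ 0}` is finite everywhere on `ℕ*`. -/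
theorem overshoot_finite_expectation
    (ν : ℤ → ℝ≥0∞) (hprob : ∑' x : ℤ, ν x = 1)
    (hmean_summable : Summable (fun x : ℤ => (x : ℝ) * (ν x).toReal))
    (hmean : ∑' x : ℤ, (x : ℝ) * (ν x).toReal = 0)
    (hexp : ∃ δ : ℝ, 0 < δ ∧
      (∑' x : ℤ, ν x * ENNReal.ofReal (Real.exp (-δ * (x : ℝ)))) < ⊤)
    (habs : (∑' x : ℤ, ν x * ENNReal.ofReal |(x : ℝ)|) < ⊤) :
    ∀ x : ℤ, 0 < x →
      (∑' w : ℤ, exitK ν {y : ℤ | 0 < y} x w * ENNReal.ofReal |(w : ℝ)|) < ⊤ :=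
  overshoot_finite_expectation_general ν hprob hmean_summable hmean hexp

end KRWQ
end

section
/- Under hypothesis (H2), the killed random walk (Z₊(t)) satisfies the communication condition on the whole space ℕ*×ℕ*: there exist θ > 0 and C > 0 such that for any z ≠ z' in ℕ*×ℕ* there is a sequence of points z₀, z₁, ..., zₙ ∈ ℕ*×ℕ* with z₀ = z, zₙ = z' and n ≤ C|z'−z|, such that |zᵢ − zᵢ₋₁| ≤ C and P_{zᵢ₋₁}(Z₊(1) = zᵢ) ≥ θ for all i = 1, ..., n. -/
/-!
By (H2) the killed walk can go from `(1,1)` to `(2,1)` and to `(1,2)` and back, each time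
along finitely many jumps of positive probability. The quadrant is stable under translation
by vectors of `ℕ²`, so translating these four paths yields unit moves in the four axis
directions from every point of the quadrant, all made of jumps from one finite set. Going from
`z` to `z'` first horizontally and then vertically takes `|z'₁ - z₁| + |z'₂ - z₂| ≤ 2|z' - z|`
unit moves; `θ` is the least probability of a jump of that finite set, and `C` bounds both
the jump lengths and the number of steps per unit move.
-/

open scoped ENNReal Classical
open Filter

namespace KRWQ

section Walks

variable {G : Type*} [AddCommGroup G] {A F F' : Set G} {m n N : ℕ} {d s z z' z'' : G}

def HasWalk (A F : Set G) (n : ℕ) (z z' : G) : Prop :=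
  ∃ p : ℕ → G, p 0 = z ∧ p n = z' ∧ ∀ i < n, p (i + 1) ∈ A ∧ p (i + 1) - p i ∈ F

theorem HasWalk.refl (z : G) : HasWalk A F 0 z z :=
  ⟨fun _ => z, rfl, rfl, fun _ hi => absurd hi (Nat.not_lt_zero _)⟩

theorem HasWalk.single (hz' : z' ∈ A) (hd : z' - z ∈ F) : HasWalk A F 1 z z' := by
  refine ⟨fun i => if i = 0 then z else z', rfl, rfl, fun i hi => ?_⟩
  obtain rfl : i = 0 := by omega
  simpa using ⟨hz', hd⟩

theorem HasWalk.trans (h : HasWalk A F m z z') (h' : HasWalk A F n z' z'') :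
    HasWalk A F (m + n) z z'' := by
  obtain ⟨p, hp0, hpm, hp⟩ := h
  obtain ⟨q, hq0, hqn, hq⟩ := h'
  obtain ⟨r, hrp, hrq⟩ : ∃ r : ℕ → G, (∀ i ≤ m, r i = p i) ∧ ∀ i, m ≤ i → r i = q (i - m) := by
    refine ⟨fun i => if i ≤ m then p i else q (i - m), fun i hi => if_pos hi, fun i hmi => ?_⟩
    rcases hmi.eq_or_lt with rfl | hmi
    · simp [hpm, hq0]
    · exact if_neg hmi.not_ge
  refine ⟨r, by rw [hrp 0 m.zero_le, hp0], by rw [hrq _ (by omega), Nat.add_sub_cancel_left, hqn],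
    fun i hi => ?_⟩
  rcases lt_or_ge i m with him | hmi
  · rw [hrp i him.le, hrp (i + 1) him]
    exact hp i him
  · rw [hrq i hmi, hrq (i + 1) (by omega), Nat.sub_add_comm hmi]
    exact hq (i - m) (by omega)

theorem HasWalk.mono (hF : F ⊆ F') (h : HasWalk A F n z z') : HasWalk A F' n z z' := by
  obtain ⟨p, hp0, hpn, hp⟩ := h
  exact ⟨p, hp0, hpn, fun i hi => ⟨(hp i hi).1, hF (hp i hi).2⟩⟩

theorem HasWalk.add_right (hA : ∀ a ∈ A, a + s ∈ A) (h : HasWalk A F n z z') :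
    HasWalk A F n (z + s) (z' + s) := by
  obtain ⟨p, hp0, hpn, hp⟩ := h
  refine ⟨fun i => p i + s, by simp [hp0], by simp [hpn], fun i hi => ?_⟩
  simpa only [add_sub_add_right_eq_sub] using ⟨hA _ (hp i hi).1, (hp i hi).2⟩

theorem HasWalk.exists_finset (h : HasWalk A F n z z') :
    ∃ F' : Finset G, ↑F' ⊆ F ∧ HasWalk A F' n z z' := by
  obtain ⟨p, hp0, hpn, hp⟩ := h
  refine ⟨(Finset.range n).image fun i => p (i + 1) - p i, ?_, p, hp0, hpn, fun i hi => ?_⟩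
  · intro x hx
    obtain ⟨i, hi, rfl⟩ := Finset.mem_image.mp hx
    exact (hp i (Finset.mem_range.mp hi)).2
  · exact ⟨(hp i hi).1, Finset.mem_image_of_mem _ (Finset.mem_range.mpr hi)⟩

theorem nstepK_one (μ : G → ℝ≥0∞) (A : Set G) (z z' : G) :
    nstepK μ A 1 z z' = A.indicator (fun u => μ (u - z)) z' := by
  simp only [nstepK]
  congr 1
  ext u
  rw [tsum_eq_single z fun w hw => by simp [hw]]
  simp

theorem hasWalk_of_nstepK_pos {μ : G → ℝ≥0∞} (h : 0 < nstepK μ A n z z') :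
    HasWalk A {d | 0 < μ d} n z z' := by
  induction n generalizing z' with
  | zero =>
    obtain rfl : z' = z := by
      by_contra hne
      simp [nstepK, hne] at h
    exact .refl z'
  | succ n ih =>
    rw [nstepK] at h
    have hz' : z' ∈ A := Set.mem_of_indicator_ne_zero h.ne'
    rw [Set.indicator_of_mem hz', pos_iff_ne_zero, Ne, ENNReal.tsum_eq_zero, not_forall] at h
    obtain ⟨w, hw⟩ := h
    rw [← Ne, mul_ne_zero_iff] at hw
    exact (ih (pos_iff_ne_zero.mpr hw.1)).trans (.single hz' (pos_iff_ne_zero.mpr hw.2))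

theorem add_nsmul_mem (hA : ∀ a ∈ A, a + d ∈ A) (hz : z ∈ A) (k : ℕ) : z + k • d ∈ A := by
  induction k with
  | zero => simpa using hz
  | succ k ih => simpa [succ_nsmul, add_assoc] using hA _ ih

theorem exists_hasWalk_add_nsmul (hA : ∀ a ∈ A, a + d ∈ A)
    (hfwd : ∀ z ∈ A, ∃ n ≤ N, HasWalk A F n z (z + d))
    (hbwd : ∀ z ∈ A, ∃ n ≤ N, HasWalk A F n (z + d) z) (k : ℕ) (hz : z ∈ A) :
    (∃ n ≤ k * N, HasWalk A F n z (z + k • d)) ∧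
      ∃ n ≤ k * N, HasWalk A F n (z + k • d) z := by
  induction k with
  | zero => exact ⟨⟨0, by simp, by simpa using .refl z⟩, ⟨0, by simp, by simpa using .refl z⟩⟩
  | succ k ih =>
    obtain ⟨⟨n₁, hn₁, h₁⟩, ⟨n₂, hn₂, h₂⟩⟩ := ih
    obtain ⟨m₁, hm₁, g₁⟩ := hfwd _ (add_nsmul_mem hA hz k)
    obtain ⟨m₂, hm₂, g₂⟩ := hbwd _ (add_nsmul_mem hA hz k)
    rw [succ_nsmul, ← add_assoc, add_one_mul]
    exact ⟨⟨n₁ + m₁, by omega, h₁.trans g₁⟩, ⟨m₂ + n₂, by omega, g₂.trans h₂⟩⟩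

theorem exists_hasWalk_add_zsmul (hA : ∀ a ∈ A, a + d ∈ A)
    (hfwd : ∀ z ∈ A, ∃ n ≤ N, HasWalk A F n z (z + d))
    (hbwd : ∀ z ∈ A, ∃ n ≤ N, HasWalk A F n (z + d) z) (k : ℤ) (hz : z ∈ A) (hz' : z + k • d ∈ A) :
    ∃ n ≤ k.natAbs * N, HasWalk A F n z (z + k • d) := by
  obtain ⟨m, rfl | rfl⟩ := Int.eq_nat_or_neg k
  · simpa using (exists_hasWalk_add_nsmul hA hfwd hbwd m hz).1
  · have h := (exists_hasWalk_add_nsmul hA hfwd hbwd m hz').2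
    rwa [neg_smul, natCast_zsmul, neg_add_cancel_right, Int.natAbs_neg, Int.natAbs_natCast]
      at *

end Walks

theorem add_mem_quadrant {z s : ℤ × ℤ} (hz : z ∈ quadrant) (hs : 0 ≤ s) : z + s ∈ quadrant := by
  obtain ⟨hs₁, hs₂⟩ := Prod.le_def.mp hs
  exact ⟨add_pos_of_pos_of_nonneg hz.1 hs₁, add_pos_of_pos_of_nonneg hz.2 hs₂⟩

theorem exists_hasWalk_quadrant_add_and_back {μ : ℤ × ℤ → ℝ≥0∞} (h2 : H2 μ) {e : ℤ × ℤ}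
    (he : 0 ≤ e) :
    ∃ F : Finset (ℤ × ℤ), (∀ d ∈ F, 0 < μ d) ∧ ∃ N : ℕ, ∀ z ∈ quadrant,
      (∃ n ≤ N, HasWalk quadrant F n z (z + e)) ∧ ∃ n ≤ N, HasWalk quadrant F n (z + e) z := by
  set o : ℤ × ℤ := (1, 1)
  have ho : o ∈ quadrant := ⟨one_pos, one_pos⟩
  have hoe : o + e ∈ quadrant := add_mem_quadrant ho he
  obtain ⟨n₁, h₁⟩ := h2 _ ho _ hoe
  obtain ⟨n₂, h₂⟩ := h2 _ hoe _ ho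
  obtain ⟨F₁, hF₁, g₁⟩ := (hasWalk_of_nstepK_pos h₁).exists_finset
  obtain ⟨F₂, hF₂, g₂⟩ := (hasWalk_of_nstepK_pos h₂).exists_finset
  refine ⟨F₁ ∪ F₂, Finset.forall_mem_union.mpr ⟨fun _ hd => hF₁ hd, fun _ hd => hF₂ hd⟩,
    max n₁ n₂, fun z hz => ?_⟩
  have hs : 0 ≤ z - o := Prod.le_def.mpr ⟨sub_nonneg.mpr hz.1, sub_nonneg.mpr hz.2⟩
  have hA : ∀ a ∈ quadrant, a + (z - o) ∈ quadrant := fun a ha => add_mem_quadrant ha hs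
  have hoz : o + (z - o) = z := add_sub_cancel o z
  have hoez : o + e + (z - o) = z + e := by abel
  refine ⟨⟨n₁, le_max_left _ _, ?_⟩, ⟨n₂, le_max_right _ _, ?_⟩⟩
  · simpa only [hoz, hoez] using (g₁.add_right hA).mono (by simp)
  · simpa only [hoz, hoez] using (g₂.add_right hA).mono (by simp)

theorem exists_hasWalk_quadrant {μ : ℤ × ℤ → ℝ≥0∞} (h2 : H2 μ) :
    ∃ F : Finset (ℤ × ℤ), (∀ d ∈ F, 0 < μ d) ∧ ∃ N : ℕ, ∀ z ∈ quadrant, ∀ z' ∈ quadrant,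
      ∃ n ≤ ((z' - z).1.natAbs + (z' - z).2.natAbs) * N, HasWalk quadrant F n z z' := by
  obtain ⟨F₁, hF₁, N₁, h₁⟩ := exists_hasWalk_quadrant_add_and_back h2 (e := (1, 0)) (by decide)
  obtain ⟨F₂, hF₂, N₂, h₂⟩ := exists_hasWalk_quadrant_add_and_back h2 (e := (0, 1)) (by decide)
  refine ⟨F₁ ∪ F₂, Finset.forall_mem_union.mpr ⟨hF₁, hF₂⟩, max N₁ N₂, fun z hz z' hz' => ?_⟩
  set k₁ := z'.1 - z.1
  set k₂ := z'.2 - z.2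
  have hw : z + k₁ • ((1, 0) : ℤ × ℤ) = (z'.1, z.2) := by ext <;> simp [k₁]
  have hw' : (z'.1, z.2) + k₂ • ((0, 1) : ℤ × ℤ) = z' := by ext <;> simp [k₂]
  have hwq : (z'.1, z.2) ∈ quadrant := ⟨hz'.1, hz.2⟩
  obtain ⟨n₁, hn₁, g₁⟩ := exists_hasWalk_add_zsmul (fun a ha => add_mem_quadrant ha (by decide))
    (fun a ha => (h₁ a ha).1) (fun a ha => (h₁ a ha).2) k₁ hz (by rwa [hw])
  obtain ⟨n₂, hn₂, g₂⟩ := exists_hasWalk_add_zsmul (fun a ha => add_mem_quadrant ha (by decide))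
    (fun a ha => (h₂ a ha).1) (fun a ha => (h₂ a ha).2) k₂ hwq (by rwa [hw'])
  rw [hw] at g₁
  rw [hw'] at g₂
  refine ⟨n₁ + n₂, ?_,
    (g₁.mono (F' := ↑(F₁ ∪ F₂)) (by simp)).trans (g₂.mono (by simp))⟩
  have := Nat.mul_le_mul_left k₁.natAbs (le_max_left N₁ N₂)
  have := Nat.mul_le_mul_left k₂.natAbs (le_max_right N₁ N₂)
  simp only [Prod.fst_sub, Prod.snd_sub]
  nlinarith

theorem normZ_nonneg (z : ℤ × ℤ) : 0 ≤ normZ z := Real.sqrt_nonneg _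

theorem natAbs_add_natAbs_le_two_mul_normZ (z : ℤ × ℤ) :
    ((z.1.natAbs + z.2.natAbs : ℕ) : ℝ) ≤ 2 * normZ z := by
  have h₁ : |(z.1 : ℝ)| ≤ normZ z := Real.abs_le_sqrt (le_add_of_nonneg_right (sq_nonneg _))
  have h₂ : |(z.2 : ℝ)| ≤ normZ z := Real.abs_le_sqrt (le_add_of_nonneg_left (sq_nonneg _))
  push_cast [Nat.cast_natAbs]
  linarith

theorem killed_walk_communication_condition_general
    (μ : ℤ × ℤ → ℝ≥0∞)
    (h2 : H2 μ) :
    ∃ θ : ℝ≥0∞, 0 < θ ∧ ∃ C : ℝ, 0 < C ∧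
      ∀ z ∈ quadrant, ∀ z' ∈ quadrant, z ≠ z' →
        ∃ n : ℕ, ∃ path : ℕ → ℤ × ℤ,
          path 0 = z ∧ path n = z' ∧ (n : ℝ) ≤ C * normZ (z' - z) ∧
          ∀ i : ℕ, 1 ≤ i → i ≤ n →
            path i ∈ quadrant ∧
            normZ (path i - path (i - 1)) ≤ C ∧
            θ ≤ nstepK μ quadrant 1 (path (i - 1)) (path i) := by
  obtain ⟨F, hF, N, hwalk⟩ := exists_hasWalk_quadrant h2
  have hsum : 0 ≤ ∑ d ∈ F, normZ d := Finset.sum_nonneg fun d _ => normZ_nonneg d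
  refine ⟨F.inf μ, (Finset.lt_inf_iff ENNReal.zero_lt_top).mpr hF,
    ∑ d ∈ F, normZ d + 2 * N + 1, by positivity, fun z hz z' hz' _ => ?_⟩
  obtain ⟨n, hn, p, hp0, hpn, hp⟩ := hwalk z hz z' hz'
  refine ⟨n, p, hp0, hpn, ?_, fun i hi hin => ?_⟩
  · calc (n : ℝ) ≤ ((z' - z).1.natAbs + (z' - z).2.natAbs : ℕ) * N := mod_cast hn
      _ ≤ 2 * normZ (z' - z) * N := by
        gcongr
        exact natAbs_add_natAbs_le_two_mul_normZ _
      _ ≤ (∑ d ∈ F, normZ d + 2 * N + 1) * normZ (z' - z) := by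
        nlinarith [normZ_nonneg (z' - z)]
  obtain ⟨hmem, hstep⟩ := hp (i - 1) (by omega)
  rw [Nat.sub_add_cancel hi] at hmem hstep
  refine ⟨hmem, ?_, ?_⟩
  · have := Finset.single_le_sum (fun d _ => normZ_nonneg d) hstep
    linarith
  · rw [nstepK_one, Set.indicator_of_mem hmem]
    exact Finset.inf_le hstep

/-- **Proposition 5.1.**  Under (H2), the killed random walk `Z₊` satisfies the
communication condition on the whole space `ℕ*×ℕ*`: there exist `θ > 0` and `C > 0`
such that any pair of distinct points `z, z'` of the quadrant can be joined by a path
`z₀ = z, z₁, …, zₙ = z'` inside the quadrant with `n ≤ C|z'−z|`, `|zᵢ−zᵢ₋₁| ≤ C` and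
`P_{zᵢ₋₁}(Z₊(1) = zᵢ) ≥ θ` for all `i = 1,…,n`. -/
theorem killed_walk_communication_condition
    (μ : ℤ × ℤ → ℝ≥0∞) (hprob : ∑' z : ℤ × ℤ, μ z = 1)
    (h2 : H2 μ) :
    ∃ θ : ℝ≥0∞, 0 < θ ∧ ∃ C : ℝ, 0 < C ∧
      ∀ z ∈ quadrant, ∀ z' ∈ quadrant, z ≠ z' →
        ∃ n : ℕ, ∃ path : ℕ → ℤ × ℤ,
          path 0 = z ∧ path n = z' ∧ (n : ℝ) ≤ C * normZ (z' - z) ∧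
          ∀ i : ℕ, 1 ≤ i → i ≤ n →
            path i ∈ quadrant ∧
            normZ (path i - path (i - 1)) ≤ C ∧
            θ ≤ nstepK μ quadrant 1 (path (i - 1)) (path i) :=
  killed_walk_communication_condition_general μ h2

end KRWQ
end
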